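/- arXiv:2305.16920 — 9 statements merged into one kernel-verified Lean document; each statement's English description precedes it below -/
import Mathlib

section
/- Let Γ be a set and let F ⊆ ℓ^∞(Γ) be a linear subspace containing the constant functions which is closed under pointwise limits of bounded monotone sequences (i.e., if (f_n) is a monotone sequence in F that is uniformly bounded and converges pointwise to g ∈ ℓ^∞(Γ), then g ∈ F). Then F is closed in the uniform (supremum) norm of ℓ^∞(Γ). -/
open Filter Topology

/-- If a linear subspace `F` of `ℓ^∞(Γ)` contains the constant functions and is closed under
pointwise limits of uniformly bounded monotone sequences, then `F` is closed in the supremum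
norm of `ℓ^∞(Γ)` (i.e., contains every bounded uniform limit of its elements). -/
theorem stmt0 {Γ : Type*} (F : Submodule ℝ (Γ → ℝ))
    (hbdd : ∀ f ∈ F, ∃ C : ℝ, ∀ x, |f x| ≤ C)
    (hconst : ∀ c : ℝ, (fun _ : Γ => c) ∈ F)
    (hmono : ∀ (f : ℕ → Γ → ℝ) (g : Γ → ℝ), (∀ n, f n ∈ F) →
      (Monotone f ∨ Antitone f) → (∃ C : ℝ, ∀ n x, |f n x| ≤ C) →
      (∃ C : ℝ, ∀ x, |g x| ≤ C) →
      (∀ x, Tendsto (fun n => f n x) atTop (𝓝 (g x))) → g ∈ F) :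
    ∀ g : Γ → ℝ, (∃ C : ℝ, ∀ x, |g x| ≤ C) →
      (∀ ε > (0 : ℝ), ∃ f ∈ F, ∀ x, |f x - g x| ≤ ε) → g ∈ F := by
  intro g hgbdd happrox
  obtain ⟨C, hC⟩ := hgbdd
  -- choose approximants
  have hsel : ∀ n : ℕ, ∃ f ∈ F, ∀ x, |f x - g x| ≤ (1/4 : ℝ) ^ n := fun n =>
    happrox ((1/4 : ℝ) ^ n) (by positivity)
  choose f hfF hf using hsel
  set h : ℕ → Γ → ℝ := fun n x => f n x - 2 * (1/4 : ℝ) ^ n with hh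
  have hhF : ∀ n, h n ∈ F := fun n => F.sub_mem (hfF n) (hconst _)
  have hmonoh : Monotone h := by
    apply monotone_nat_of_le_succ
    intro n x
    have h1 := abs_le.1 (hf n x)
    have h2 := abs_le.1 (hf (n + 1) x)
    simp only [hh]
    have : (1/4 : ℝ) ^ (n + 1) = (1/4 : ℝ) ^ n * (1/4) := pow_succ _ _
    nlinarith [h1.1, h1.2, h2.1, h2.2]
  have hbound : ∃ C' : ℝ, ∀ n x, |h n x| ≤ C' := by
    refine ⟨C + 3, fun n x => ?_⟩
    have h1 := abs_le.1 (hf n x)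
    have h2 := abs_le.1 (hC x)
    have hp : (1/4 : ℝ) ^ n ≤ 1 := pow_le_one₀ (by norm_num) (by norm_num)
    have hp0 : (0:ℝ) ≤ (1/4 : ℝ) ^ n := by positivity
    rw [abs_le]
    constructor <;> simp only [hh] <;> nlinarith
  have hconv : ∀ x, Tendsto (fun n => h n x) atTop (𝓝 (g x)) := by
    intro x
    rw [← tendsto_sub_nhds_zero_iff]
    refine squeeze_zero_norm (a := fun n => 3 * (1/4 : ℝ) ^ n) ?_ ?_
    · intro n
      have h1 := abs_le.1 (hf n x)
      have hp0 : (0:ℝ) ≤ (1/4 : ℝ) ^ n := by positivity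
      simp only [hh, Real.norm_eq_abs, abs_le]
      constructor <;> nlinarith
    · have := tendsto_pow_atTop_nhds_zero_of_lt_one (r := (1/4 : ℝ)) (by norm_num) (by norm_num)
      simpa using this.const_mul 3
  exact hmono h g hhF (Or.inl hmonoh) hbound ⟨C, hC⟩ hconv
end

section
/- Let A be an ordered vector space and T : A → A a linear operator with 0 ≤ T ≤ I, meaning T x ≥ 0 and x − T x ≥ 0 for every x ≥ 0. If (x_ν) is a nondecreasing net in A with supremum x ∈ A, then (T x_ν) is a nondecreasing net with supremum T x. -/
theorem IsLUB.image_of_monotone_of_monotone_sub {A : Type*} [AddCommGroup A] [PartialOrder A]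
    [IsOrderedAddMonoid A] {f : A → A} (hf : Monotone f) (hf' : Monotone fun x => x - f x)
    {S : Set A} {s : A} (hs : IsLUB S s) : IsLUB (f '' S) (f s) := by
  refine ⟨Monotone.mem_upperBounds_image hf hs.1, fun b hb => ?_⟩
  have hshift : s - f s + b ∈ upperBounds S := fun y hy =>
    calc y = (y - f y) + f y := (sub_add_cancel y (f y)).symm
      _ ≤ (s - f s) + b := add_le_add (hf' (hs.1 hy)) (hb (Set.mem_image_of_mem f hy))
  have : s ≤ s - f s + b := hs.2 hshift
  rwa [sub_add_comm, le_add_iff_nonneg_left, sub_nonneg] at this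

theorem stmt1_general {A : Type*} [AddCommGroup A] [PartialOrder A] [IsOrderedAddMonoid A] [Module ℝ A]
    (T : A →ₗ[ℝ] A)
    (hT0 : ∀ x : A, 0 ≤ x → 0 ≤ T x)
    (hTI : ∀ x : A, 0 ≤ x → 0 ≤ x - T x)
    {ι : Type*} [Preorder ι]
    (x : ι → A) (s : A) (hmono : Monotone x) (hsup : IsLUB (Set.range x) s) :
    Monotone (fun i => T (x i)) ∧ IsLUB (Set.range fun i => T (x i)) (T s) := by
  have hT : Monotone T := (monotone_iff_map_nonneg T).2 hT0
  have hIT : Monotone fun y => y - T y := (monotone_iff_map_nonneg (LinearMap.id - T)).2 hTI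
  refine ⟨hT.comp hmono, ?_⟩
  rw [← Function.comp_def, Set.range_comp]
  exact hsup.image_of_monotone_of_monotone_sub hT hIT

/-- Let `A` be an ordered vector space and `T : A → A` a linear operator with `0 ≤ T ≤ I`.
If `(x i)` is a nondecreasing net in `A` with supremum `s`, then `(T (x i))` is a
nondecreasing net with supremum `T s`. -/
theorem stmt1 {A : Type*} [AddCommGroup A] [PartialOrder A] [IsOrderedAddMonoid A] [Module ℝ A]
    (T : A →ₗ[ℝ] A)
    (hT0 : ∀ x : A, 0 ≤ x → 0 ≤ T x)
    (hTI : ∀ x : A, 0 ≤ x → 0 ≤ x - T x)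
    {ι : Type*} [Preorder ι] [IsDirected ι (· ≤ ·)] [Nonempty ι]
    (x : ι → A) (s : A) (hmono : Monotone x) (hsup : IsLUB (Set.range x) s) :
    Monotone (fun i => T (x i)) ∧ IsLUB (Set.range fun i => T (x i)) (T s) :=
  stmt1_general T hT0 hTI x s hmono hsup
end

section
/- Let A be a Banach space, T : A → A** a bounded linear operator, and T̂ = (T* ∘ κ_{A*})* its canonical extension to A**. If A is an ordered Banach space and T ≥ 0 (i.e., T a ≥ 0 in A** for every a ≥ 0 in A, where positivity in A** means nonnegativity on positive functionals), then T̂ ≥ 0. -/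
open NormedSpace

/-- The dual (adjoint) of a bounded operator `S : E → F`, as a bounded operator
`Dual ℝ F → Dual ℝ E`, `g ↦ g ∘ S`. -/
noncomputable def dualOp {E F : Type*} [SeminormedAddCommGroup E] [NormedSpace ℝ E]
    [SeminormedAddCommGroup F] [NormedSpace ℝ F] (S : E →L[ℝ] F) :
    StrongDual ℝ F →L[ℝ] StrongDual ℝ E :=
  (ContinuousLinearMap.compL ℝ E F ℝ).flip S

/-- For `T : A → A**`, the operator `T̂ = (T* ∘ κ_{A*})* : A** → A**`. -/
noncomputable def hatOp {A : Type*} [NormedAddCommGroup A] [NormedSpace ℝ A]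
    (T : A →L[ℝ] StrongDual ℝ (StrongDual ℝ A)) :
    StrongDual ℝ (StrongDual ℝ A) →L[ℝ] StrongDual ℝ (StrongDual ℝ A) :=
  dualOp ((dualOp T) ∘L inclusionInDoubleDual ℝ (StrongDual ℝ A))

/-- A functional `φ ∈ A*` is positive if `φ a ≥ 0` for every `a ≥ 0` in `A`. -/
def IsPosFunctional {A : Type*} [NormedAddCommGroup A] [NormedSpace ℝ A]
    [PartialOrder A] (φ : StrongDual ℝ A) : Prop :=
  ∀ a : A, 0 ≤ a → 0 ≤ φ a

/-- An element `Φ ∈ A**` is positive if it is nonnegative on every positive functional. -/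
def IsPosBidual {A : Type*} [NormedAddCommGroup A] [NormedSpace ℝ A]
    [PartialOrder A] (Φ : StrongDual ℝ (StrongDual ℝ A)) : Prop :=
  ∀ φ : StrongDual ℝ A, IsPosFunctional φ → 0 ≤ Φ φ

theorem dualOp_apply {E F : Type*} [SeminormedAddCommGroup E] [NormedSpace ℝ E]
    [SeminormedAddCommGroup F] [NormedSpace ℝ F] (S : E →L[ℝ] F) (g : StrongDual ℝ F) (x : E) :
    dualOp S g x = g (S x) :=
  rfl

theorem hatOp_apply {A : Type*} [NormedAddCommGroup A] [NormedSpace ℝ A]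
    (T : A →L[ℝ] StrongDual ℝ (StrongDual ℝ A)) (Φ : StrongDual ℝ (StrongDual ℝ A))
    (φ : StrongDual ℝ A) :
    hatOp T Φ φ = Φ (dualOp T (inclusionInDoubleDual ℝ (StrongDual ℝ A) φ)) :=
  rfl

theorem isPosFunctional_dualOp_inclusionInDoubleDual {A : Type*} [NormedAddCommGroup A]
    [NormedSpace ℝ A] [PartialOrder A] {T : A →L[ℝ] StrongDual ℝ (StrongDual ℝ A)}
    (hT : ∀ a : A, 0 ≤ a → IsPosBidual (T a)) {φ : StrongDual ℝ A} (hφ : IsPosFunctional φ) :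
    IsPosFunctional (dualOp T (inclusionInDoubleDual ℝ (StrongDual ℝ A) φ)) := fun a ha => by
  rw [dualOp_apply, NormedSpace.dual_def]
  exact hT a ha φ hφ

theorem stmt3_general {A : Type*} [NormedAddCommGroup A] [NormedSpace ℝ A]
    [PartialOrder A]
    (T : A →L[ℝ] StrongDual ℝ (StrongDual ℝ A))
    (hT : ∀ a : A, 0 ≤ a → IsPosBidual (T a)) :
    ∀ Φ : StrongDual ℝ (StrongDual ℝ A), IsPosBidual Φ → IsPosBidual (hatOp T Φ) := by
  intro Φ hΦ φ hφ
  rw [hatOp_apply]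
  exact hΦ _ (isPosFunctional_dualOp_inclusionInDoubleDual hT hφ)

/-- If `A` is an ordered Banach space (with closed positive cone) and `T : A → A**`
satisfies `T ≥ 0` (i.e. `T a` is positive in `A**` for every `a ≥ 0`), then the canonical
extension `T̂ = (T* ∘ κ_{A*})* : A** → A**` satisfies `T̂ ≥ 0`. -/
theorem stmt3 {A : Type*} [NormedAddCommGroup A] [NormedSpace ℝ A] [CompleteSpace A]
    [PartialOrder A] (hcone : IsClosed {a : A | 0 ≤ a})
    (T : A →L[ℝ] StrongDual ℝ (StrongDual ℝ A))
    (hT : ∀ a : A, 0 ≤ a → IsPosBidual (T a)) :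
    ∀ Φ : StrongDual ℝ (StrongDual ℝ A), IsPosBidual Φ → IsPosBidual (hatOp T Φ) :=
  stmt3_general T hT
end

section
/- Let Γ be a nonempty set and A ⊆ ℓ^∞(Γ) a subalgebra which is closed under pointwise limits of uniformly bounded monotone sequences. Then A is norm-closed and moreover closed under pointwise limits of uniformly bounded pointwise convergent sequences. -/
/-! The monotone iteration `s ↦ s + (t - s²) / 2` from `0` increases to `√t` on `[0, 1]` and is
polynomial in `t`, so `A` is closed under `√` of functions with values in `[0, 1]`, hence under
`|·|`, hence under `⊔`. A bounded pointwise convergent sequence `f` then has its limit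
`⨅ n, ⨆ k, f (n + k)` in `A`, as an antitone limit of monotone limits of finite maxima. A uniform
limit of bounded elements of `A` is in particular such a limit. -/

open Filter Topology

noncomputable def sqrtIter (t : ℝ) : ℕ → ℝ
  | 0 => 0
  | n + 1 => sqrtIter t n + (t - sqrtIter t n ^ 2) / 2

section sqrtIter

variable {t : ℝ}

lemma sqrtIter_mem_Icc (ht0 : 0 ≤ t) (ht1 : t ≤ 1) (n : ℕ) : sqrtIter t n ∈ Set.Icc 0 √t := by
  have hsqrt : √t ^ 2 = t := Real.sq_sqrt ht0
  have hsqrt1 : √t ≤ 1 := Real.sqrt_le_one.2 ht1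
  induction n with
  | zero => simp [sqrtIter]
  | succ n ih =>
    obtain ⟨h0, h1⟩ := ih
    -- `√t - s' = (√t - s) (1 - (√t + s) / 2)` for `s' = s + (t - s²) / 2`
    constructor <;> simp only [sqrtIter] <;>
      nlinarith [mul_nonneg (sub_nonneg.2 h1) (by linarith : (0 : ℝ) ≤ 2 - (√t + sqrtIter t n))]

lemma monotone_sqrtIter (ht0 : 0 ≤ t) (ht1 : t ≤ 1) : Monotone (sqrtIter t) := by
  refine monotone_nat_of_le_succ fun n => ?_
  obtain ⟨h0, h1⟩ := sqrtIter_mem_Icc ht0 ht1 n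
  have : sqrtIter t n ^ 2 ≤ t := by nlinarith [Real.sq_sqrt ht0]
  simp only [sqrtIter]
  linarith

lemma tendsto_sqrtIter (ht0 : 0 ≤ t) (ht1 : t ≤ 1) :
    Tendsto (sqrtIter t) atTop (𝓝 √t) := by
  have hbdd : BddAbove (Set.range (sqrtIter t)) :=
    ⟨√t, by rintro _ ⟨n, rfl⟩; exact (sqrtIter_mem_Icc ht0 ht1 n).2⟩
  set L := ⨆ n, sqrtIter t n
  have hL : Tendsto (sqrtIter t) atTop (𝓝 L) := tendsto_atTop_ciSup (monotone_sqrtIter ht0 ht1) hbdd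
  have hL0 : 0 ≤ L := (sqrtIter_mem_Icc ht0 ht1 0).1.trans (le_ciSup hbdd 0)
  have hfix : L = L + (t - L ^ 2) / 2 :=
    tendsto_nhds_unique (hL.comp (tendsto_add_atTop_nat 1))
      (hL.add ((tendsto_const_nhds.sub (hL.pow 2)).div_const 2))
  rwa [show √t = L by rw [← Real.sqrt_sq hL0]; congr 1; linarith]

end sqrtIter

def MonotoneLimitClosed {Γ : Type*} (A : Set (Γ → ℝ)) : Prop :=
  ∀ (f : ℕ → Γ → ℝ) (g : Γ → ℝ), (∀ n, f n ∈ A) → (Monotone f ∨ Antitone f) →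
    (∃ C : ℝ, ∀ n x, |f n x| ≤ C) → (∀ x, Tendsto (fun n => f n x) atTop (𝓝 (g x))) → g ∈ A

def BoundedLimitClosed {Γ : Type*} (A : Set (Γ → ℝ)) : Prop :=
  ∀ (f : ℕ → Γ → ℝ) (g : Γ → ℝ), (∀ n, f n ∈ A) → (∃ C : ℝ, ∀ n x, |f n x| ≤ C) →
    (∀ x, Tendsto (fun n => f n x) atTop (𝓝 (g x))) → g ∈ A

lemma tendsto_ciSup_tail {u : ℕ → ℝ} {a : ℝ} (hu : Tendsto u atTop (𝓝 a))
    (hbdd : BddAbove (Set.range u)) : Tendsto (fun n => ⨆ k, u (n + k)) atTop (𝓝 a) := by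
  have hbdd_tail (n : ℕ) : BddAbove (Set.range fun k => u (n + k)) :=
    hbdd.mono (Set.range_comp_subset_range _ u)
  refine tendsto_order.2 ⟨fun b hb => ?_, fun b hb => ?_⟩
  · filter_upwards [hu.eventually (lt_mem_nhds hb)] with n hn
    exact hn.trans_le (le_ciSup (hbdd_tail n) 0)
  · obtain ⟨c, hac, hcb⟩ := exists_between hb
    obtain ⟨N, hN⟩ := eventually_atTop.1 (hu.eventually (gt_mem_nhds hac))
    filter_upwards [eventually_ge_atTop N] with n hn
    exact (ciSup_le fun k => (hN (n + k) (by omega)).le).trans_lt hcb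

section SubalgebraOfFunctions

variable {Γ : Type*} {A : Submodule ℝ (Γ → ℝ)}

lemma sqrtIter_comp_mem (hmul : ∀ f ∈ A, ∀ g ∈ A, (fun x => f x * g x) ∈ A)
    {u : Γ → ℝ} (hu : u ∈ A) (n : ℕ) : (fun x => sqrtIter (u x) n) ∈ A := by
  induction n with
  | zero => exact A.zero_mem
  | succ n ih =>
    have heq : (fun x => sqrtIter (u x) (n + 1)) = (fun x => sqrtIter (u x) n) + (2 : ℝ)⁻¹ • u -
        (2 : ℝ)⁻¹ • fun x => sqrtIter (u x) n * sqrtIter (u x) n := by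
      funext x
      simp only [sqrtIter, Pi.sub_apply, Pi.add_apply, Pi.smul_apply, smul_eq_mul]
      ring
    rw [heq]
    exact A.sub_mem (A.add_mem ih (A.smul_mem _ hu)) (A.smul_mem _ (hmul _ ih _ ih))

lemma partialSups_mem (hsup : ∀ f ∈ A, ∀ g ∈ A, f ⊔ g ∈ A) {f : ℕ → Γ → ℝ}
    (hf : ∀ n, f n ∈ A) (n : ℕ) : partialSups f n ∈ A := by
  induction n with
  | zero => simpa using hf 0
  | succ n ih =>
    rw [← Order.succ_eq_add_one, partialSups_succ]
    exact hsup _ ih _ (hf _)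

namespace MonotoneLimitClosed

lemma sqrt_comp_mem (hmono : MonotoneLimitClosed (A : Set (Γ → ℝ)))
    (hmul : ∀ f ∈ A, ∀ g ∈ A, (fun x => f x * g x) ∈ A) {u : Γ → ℝ} (hu : u ∈ A)
    (hu0 : ∀ x, 0 ≤ u x) (hu1 : ∀ x, u x ≤ 1) : (fun x => √(u x)) ∈ A := by
  refine hmono _ _ (sqrtIter_comp_mem hmul hu)
    (Or.inl fun m n hmn x => monotone_sqrtIter (hu0 x) (hu1 x) hmn) ⟨1, fun n x => ?_⟩
    fun x => tendsto_sqrtIter (hu0 x) (hu1 x)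
  obtain ⟨h0, h1⟩ := sqrtIter_mem_Icc (hu0 x) (hu1 x) n
  rw [abs_of_nonneg h0]
  exact h1.trans (Real.sqrt_le_one.2 (hu1 x))

lemma abs_comp_mem (hmono : MonotoneLimitClosed (A : Set (Γ → ℝ)))
    (hmul : ∀ f ∈ A, ∀ g ∈ A, (fun x => f x * g x) ∈ A) {f : Γ → ℝ} (hf : f ∈ A) {C : ℝ}
    (hC : ∀ x, |f x| ≤ C) : (fun x => |f x|) ∈ A := by
  set D := |C| + 1
  have hD : 0 < D := by positivity
  have hfD (x : Γ) : |f x| ≤ D := (hC x).trans (by linarith [le_abs_self C])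
  -- `|f| = D √((f / D)²)`, and `(f / D)²` takes values in `[0, 1]`
  have hsq : (D ^ 2)⁻¹ • (fun x => f x * f x) ∈ A := A.smul_mem _ (hmul f hf f hf)
  have hsqrt := hmono.sqrt_comp_mem hmul hsq
    (fun x => mul_nonneg (by positivity) (mul_self_nonneg (f x))) fun x => by
    simp only [Pi.smul_apply, smul_eq_mul, ← sq, ← sq_abs (f x)]
    rw [inv_mul_le_one₀ (by positivity)]
    exact pow_le_pow_left₀ (abs_nonneg _) (hfD x) 2
  convert A.smul_mem D hsqrt using 1
  funext x
  simp only [Pi.smul_apply, smul_eq_mul, ← sq]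
  rw [Real.sqrt_mul (by positivity), Real.sqrt_inv, Real.sqrt_sq hD.le, Real.sqrt_sq_eq_abs]
  field_simp

lemma sup_mem (hmono : MonotoneLimitClosed (A : Set (Γ → ℝ)))
    (hbdd : ∀ f ∈ A, ∃ C : ℝ, ∀ x, |f x| ≤ C)
    (hmul : ∀ f ∈ A, ∀ g ∈ A, (fun x => f x * g x) ∈ A) {f g : Γ → ℝ} (hf : f ∈ A) (hg : g ∈ A) :
    f ⊔ g ∈ A := by
  obtain ⟨C, hC⟩ := hbdd _ (A.sub_mem hf hg)
  have habs := hmono.abs_comp_mem hmul (A.sub_mem hf hg) hC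
  convert A.smul_mem (2 : ℝ)⁻¹ (A.add_mem (A.add_mem hf hg) habs) using 1
  funext x
  simp only [Pi.sup_apply, Pi.smul_apply, Pi.add_apply, Pi.sub_apply, smul_eq_mul]
  rcases le_total (f x) (g x) with h | h
  · rw [max_eq_right h, abs_of_nonpos (by linarith)]; ring
  · rw [max_eq_left h, abs_of_nonneg (by linarith)]; ring

lemma boundedLimitClosed (hmono : MonotoneLimitClosed (A : Set (Γ → ℝ)))
    (hsup : ∀ f ∈ A, ∀ g ∈ A, f ⊔ g ∈ A) : BoundedLimitClosed (A : Set (Γ → ℝ)) := by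
  intro f g hf ⟨C, hC⟩ hfg
  have hbdd (x : Γ) : BddAbove (Set.range fun n => f n x) :=
    ⟨C, by rintro _ ⟨n, rfl⟩; exact (abs_le.1 (hC n x)).2⟩
  have hbdd_tail (n : ℕ) (x : Γ) : BddAbove (Set.range fun k => f (n + k) x) :=
    (hbdd x).mono (Set.range_comp_subset_range (n + ·) (f · x))
  set s : ℕ → Γ → ℝ := fun n x => ⨆ k, f (n + k) x
  have hs_bound (n : ℕ) (x : Γ) : |s n x| ≤ C := abs_le.2
    ⟨(abs_le.1 (hC n x)).1.trans (le_ciSup (hbdd_tail n x) 0),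
      ciSup_le fun k => (abs_le.1 (hC (n + k) x)).2⟩
  have hs_mem (n : ℕ) : s n ∈ A := by
    refine hmono _ _ (partialSups_mem hsup fun k => hf (n + k)) (Or.inl (partialSups _).monotone)
      ⟨C, fun m x => ?_⟩ fun x => ?_
    · rw [Pi.partialSups_apply, abs_le]
      exact ⟨(abs_le.1 (hC n x)).1.trans (le_partialSups_of_le (fun k => f (n + k) x) m.zero_le),
        partialSups_le_iff.2 fun k _ => (abs_le.1 (hC (n + k) x)).2⟩
    · simp only [Pi.partialSups_apply]
      show Tendsto _ atTop (𝓝 (⨆ k, f (n + k) x))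
      rw [← ciSup_partialSups_eq' fun k => f (n + k) x]
      exact tendsto_atTop_ciSup (partialSups _).monotone
        (bddAbove_range_partialSups.2 (hbdd_tail n x))
  have hs_anti : Antitone s := fun m n hmn x => ciSup_le fun k => by
    simpa [show m + (n - m + k) = n + k by omega] using le_ciSup (hbdd_tail m x) (n - m + k)
  exact hmono s g hs_mem (Or.inr hs_anti) ⟨C, hs_bound⟩ fun x => tendsto_ciSup_tail (hfg x) (hbdd x)

end MonotoneLimitClosed

lemma BoundedLimitClosed.mem_of_forall_uniform_approx
    (hlim : BoundedLimitClosed (A : Set (Γ → ℝ))) (hbdd : ∀ f ∈ A, ∃ C : ℝ, ∀ x, |f x| ≤ C)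
    {g : Γ → ℝ} (hg : ∀ ε > (0 : ℝ), ∃ f ∈ A, ∀ x, |f x - g x| ≤ ε) : g ∈ A := by
  choose F hFA hFg using fun n : ℕ => hg (1 / ((n : ℝ) + 1)) (by positivity)
  have hinv_le (n : ℕ) : 1 / ((n : ℝ) + 1) ≤ 1 := by
    rw [div_le_one (by positivity)]; linarith [n.cast_nonneg (α := ℝ)]
  obtain ⟨C, hC⟩ := hbdd (F 0) (hFA 0)
  refine hlim F g hFA ⟨C + 1 + 1, fun n x => ?_⟩ fun x => ?_
  · calc |F n x| = |F 0 x + (g x - F 0 x) + (F n x - g x)| := by ring_nf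
      _ ≤ |F 0 x| + |F 0 x - g x| + |F n x - g x| := by
        rw [abs_sub_comm (F 0 x)]; exact abs_add_three _ _ _
      _ ≤ C + 1 + 1 := add_le_add (add_le_add (hC x) ((hFg 0 x).trans (hinv_le 0)))
        ((hFg n x).trans (hinv_le n))
  · exact tendsto_iff_norm_sub_tendsto_zero.2 <| squeeze_zero (fun _ => norm_nonneg _)
      (fun n => hFg n x) tendsto_one_div_add_atTop_nhds_zero_nat

end SubalgebraOfFunctions

theorem stmt6_general {Γ : Type*} (A : Submodule ℝ (Γ → ℝ))
    (hbdd : ∀ f ∈ A, ∃ C : ℝ, ∀ x, |f x| ≤ C)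
    (hmul : ∀ f ∈ A, ∀ g ∈ A, (fun x => f x * g x) ∈ A)
    (hmonolim : ∀ (f : ℕ → Γ → ℝ) (g : Γ → ℝ), (∀ n, f n ∈ A) →
      (Monotone f ∨ Antitone f) → (∃ C : ℝ, ∀ n x, |f n x| ≤ C) →
      (∀ x, Tendsto (fun n => f n x) atTop (𝓝 (g x))) → g ∈ A) :
    (∀ g : Γ → ℝ, (∀ ε > (0 : ℝ), ∃ f ∈ A, ∀ x, |f x - g x| ≤ ε) → g ∈ A) ∧
    (∀ (f : ℕ → Γ → ℝ) (g : Γ → ℝ), (∀ n, f n ∈ A) →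
      (∃ C : ℝ, ∀ n x, |f n x| ≤ C) →
      (∀ x, Tendsto (fun n => f n x) atTop (𝓝 (g x))) → g ∈ A) := by
  have hmono : MonotoneLimitClosed (A : Set (Γ → ℝ)) := hmonolim
  have hlim : BoundedLimitClosed (A : Set (Γ → ℝ)) :=
    hmono.boundedLimitClosed fun _ hf _ hg => hmono.sup_mem hbdd hmul hf hg
  exact ⟨fun g hg => hlim.mem_of_forall_uniform_approx hbdd hg, hlim⟩

/-- If a subalgebra `A` of `ℓ^∞(Γ)` is closed under pointwise limits of uniformly bounded
monotone sequences, then `A` is norm-closed and, moreover, closed under pointwise limits of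
uniformly bounded pointwise convergent sequences. -/
theorem stmt6 {Γ : Type*} [Nonempty Γ] (A : Submodule ℝ (Γ → ℝ))
    (hbdd : ∀ f ∈ A, ∃ C : ℝ, ∀ x, |f x| ≤ C)
    (hmul : ∀ f ∈ A, ∀ g ∈ A, (fun x => f x * g x) ∈ A)
    (hmonolim : ∀ (f : ℕ → Γ → ℝ) (g : Γ → ℝ), (∀ n, f n ∈ A) →
      (Monotone f ∨ Antitone f) → (∃ C : ℝ, ∀ n x, |f n x| ≤ C) →
      (∀ x, Tendsto (fun n => f n x) atTop (𝓝 (g x))) → g ∈ A) :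
    (∀ g : Γ → ℝ, (∀ ε > (0 : ℝ), ∃ f ∈ A, ∀ x, |f x - g x| ≤ ε) → g ∈ A) ∧
    (∀ (f : ℕ → Γ → ℝ) (g : Γ → ℝ), (∀ n, f n ∈ A) →
      (∃ C : ℝ, ∀ n x, |f n x| ≤ C) →
      (∀ x, Tendsto (fun n => f n x) atTop (𝓝 (g x))) → g ∈ A) :=
  stmt6_general A hbdd hmul hmonolim
end

section
/- Let Γ be a nonempty set and A ⊆ ℓ^∞(Γ) a norm-closed sublattice of ℓ^∞(Γ) containing the constant functions. Then A is a subalgebra of ℓ^∞(Γ): for all f, g ∈ A the pointwise product f·g belongs to A. -/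
/-!
The square is the upper envelope of its tangent lines `t ↦ 2at - a²`, and on `[-C, C]` the
maximum of the finitely many tangents at the points of `δℤ` of modulus at most `C + δ` is within
`δ²` of `t²`. For `f ∈ A` bounded by `C`, each tangent composed with `f` is an affine combination of
`f` and a constant, hence lies in `A`, and so does their maximum; as `δ → 0` these converge
uniformly to `f²`, so `f² ∈ A`. Products follow by polarisation.
-/

open Finset

lemma two_mul_mul_sub_sq_le_sq (a t : ℝ) : 2 * a * t - a ^ 2 ≤ t ^ 2 := by
  nlinarith [sq_nonneg (t - a)]

lemma exists_mem_Icc_sq_sub_sq_le_tangent {δ C t : ℝ} (hδ : 0 < δ) (ht : |t| ≤ C) :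
    ∃ k ∈ Icc (-(⌈C / δ⌉₊ : ℤ)) ⌈C / δ⌉₊,
      t ^ 2 - δ ^ 2 ≤ 2 * (k * δ) * t - (k * δ) ^ 2 := by
  have hfloor_le : (⌊t / δ⌋ : ℝ) * δ ≤ t := (le_div_iff₀ hδ).1 (Int.floor_le _)
  have hlt_floor : t < (⌊t / δ⌋ + 1 : ℝ) * δ := (div_lt_iff₀ hδ).1 (Int.lt_floor_add_one _)
  have hceil : C / δ ≤ ⌈C / δ⌉₊ := Nat.le_ceil _
  have htC := abs_le.1 ht
  refine ⟨⌊t / δ⌋, mem_Icc.2 ⟨?_, ?_⟩, ?_⟩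
  · have : -(⌈C / δ⌉₊ : ℝ) < ⌊t / δ⌋ + 1 := by
      rw [div_le_iff₀ hδ] at hceil; nlinarith
    exact_mod_cast Int.lt_add_one_iff.1 (by exact_mod_cast this)
  · have : (⌊t / δ⌋ : ℝ) ≤ ⌈C / δ⌉₊ := by
      rw [div_le_iff₀ hδ] at hceil; nlinarith
    exact_mod_cast this
  · nlinarith

lemma sq_mem_of_sup_mem {Γ : Type*} (A : Submodule ℝ (Γ → ℝ))
    (hconst : ∀ c : ℝ, (fun _ : Γ => c) ∈ A)
    (hsup : ∀ f ∈ A, ∀ g ∈ A, f ⊔ g ∈ A)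
    (hclosed : ∀ g : Γ → ℝ, (∀ ε > (0 : ℝ), ∃ f ∈ A, ∀ x, |f x - g x| ≤ ε) → g ∈ A)
    {f : Γ → ℝ} (hf : f ∈ A) {C : ℝ} (hC : ∀ x, |f x| ≤ C) : f ^ 2 ∈ A := by
  refine hclosed _ fun ε hε => ?_
  have hδ : 0 < √ε := Real.sqrt_pos.2 hε
  set N : ℤ := (⌈C / √ε⌉₊ : ℤ)
  have hN : (Icc (-N) N).Nonempty := ⟨0, by simp [N]⟩
  let tangent (k : ℤ) : Γ → ℝ := (2 * (k * √ε)) • f + fun _ => -(k * √ε) ^ 2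
  have htangent (k : ℤ) (x : Γ) : tangent k x = 2 * (k * √ε) * f x - (k * √ε) ^ 2 := by
    simp [tangent, sub_eq_add_neg]
  refine ⟨(Icc (-N) N).sup' hN tangent,
    sup'_mem _ hsup _ hN _ fun k _ => A.add_mem (A.smul_mem _ hf) (hconst _), fun x => ?_⟩
  rw [Finset.sup'_apply, abs_le, Pi.pow_apply]
  constructor
  · obtain ⟨k, hk, hle⟩ := exists_mem_Icc_sq_sub_sq_le_tangent hδ (hC x)
    rw [Real.sq_sqrt hε.le] at hle
    have := le_sup' (fun k => tangent k x) hk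
    simp only [htangent] at this ⊢
    linarith
  · have := sup'_le hN (fun k => tangent k x) fun k _ =>
      htangent k x ▸ two_mul_mul_sub_sq_le_sq _ _
    linarith

lemma mul_mem_of_sq_mem {R : Type*} [CommRing R] [Module ℝ R] (A : Submodule ℝ R)
    (hsq : ∀ f ∈ A, f ^ 2 ∈ A) {f g : R} (hf : f ∈ A) (hg : g ∈ A) : f * g ∈ A := by
  have hpolar : f * g = (2⁻¹ : ℝ) • ((f + g) ^ 2 - f ^ 2 - g ^ 2) := by
    rw [eq_inv_smul_iff₀ two_ne_zero, two_smul]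
    ring
  rw [hpolar]
  exact A.smul_mem _ (A.sub_mem (A.sub_mem (hsq _ (A.add_mem hf hg)) (hsq f hf)) (hsq g hg))

theorem stmt7_general {Γ : Type*} (A : Submodule ℝ (Γ → ℝ))
    (hbdd : ∀ f ∈ A, ∃ C : ℝ, ∀ x, |f x| ≤ C)
    (hconst : ∀ c : ℝ, (fun _ : Γ => c) ∈ A)
    (hlat : ∀ f ∈ A, ∀ g ∈ A,
      (fun x => max (f x) (g x)) ∈ A ∧ (fun x => min (f x) (g x)) ∈ A)
    (hclosed : ∀ g : Γ → ℝ, (∀ ε > (0 : ℝ), ∃ f ∈ A, ∀ x, |f x - g x| ≤ ε) → g ∈ A) :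
    ∀ f ∈ A, ∀ g ∈ A, (fun x => f x * g x) ∈ A := by
  intro f hf g hg
  refine mul_mem_of_sq_mem A (fun h hh => ?_) hf hg
  obtain ⟨C, hC⟩ := hbdd h hh
  exact sq_mem_of_sup_mem A hconst (fun f hf g hg => (hlat f hf g hg).1) hclosed hh hC

/-- A norm-closed sublattice `A` of `ℓ^∞(Γ)` containing the constant functions is a
subalgebra: the pointwise product of any two members of `A` belongs to `A`. -/
theorem stmt7 {Γ : Type*} [Nonempty Γ] (A : Submodule ℝ (Γ → ℝ))
    (hbdd : ∀ f ∈ A, ∃ C : ℝ, ∀ x, |f x| ≤ C)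
    (hconst : ∀ c : ℝ, (fun _ : Γ => c) ∈ A)
    (hlat : ∀ f ∈ A, ∀ g ∈ A,
      (fun x => max (f x) (g x)) ∈ A ∧ (fun x => min (f x) (g x)) ∈ A)
    (hclosed : ∀ g : Γ → ℝ, (∀ ε > (0 : ℝ), ∃ f ∈ A, ∀ x, |f x - g x| ≤ ε) → g ∈ A) :
    ∀ f ∈ A, ∀ g ∈ A, (fun x => f x * g x) ∈ A :=
  stmt7_general A hbdd hconst hlat hclosed
end

section
/- Let Γ be a set and A ⊆ ℓ^∞(Γ) a norm-closed subalgebra containing the constant functions, and set 𝒜 = { [f > 0] : f ∈ A } where [f > 0] = { x ∈ Γ : f(x) > 0 }. Then 𝒜 contains ∅ and Γ, and 𝒜 is closed under finite intersections and countable unions. -/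
/-- The collection of strict positivity sets `[f > 0]` of members of a family of functions. -/
def posSets {Γ : Type*} (A : Set (Γ → ℝ)) : Set (Set Γ) :=
  {S : Set Γ | ∃ f ∈ A, S = {x | 0 < f x}}

section aux

variable {Γ : Type*} (A : Submodule ℝ (Γ → ℝ))

lemma aux_pow_mem (hconst : ∀ c : ℝ, (fun _ : Γ => c) ∈ A)
    (hmul : ∀ f ∈ A, ∀ g ∈ A, (fun x => f x * g x) ∈ A)
    {f : Γ → ℝ} (hf : f ∈ A) (n : ℕ) : (fun x => f x ^ n) ∈ A := by
  induction n with
  | zero => simpa using hconst 1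
  | succ n ih =>
      have := hmul _ ih f hf
      simpa [pow_succ] using this

lemma aux_poly_mem (hconst : ∀ c : ℝ, (fun _ : Γ => c) ∈ A)
    (hmul : ∀ f ∈ A, ∀ g ∈ A, (fun x => f x * g x) ∈ A)
    {f : Γ → ℝ} (hf : f ∈ A) (p : Polynomial ℝ) :
    (fun x => p.eval (f x)) ∈ A := by
  have h : (fun x => ∑ i ∈ Finset.range (p.natDegree + 1), p.coeff i * f x ^ i) ∈ A := by
    have e : (fun x => ∑ i ∈ Finset.range (p.natDegree + 1), p.coeff i * f x ^ i)
        = ∑ i ∈ Finset.range (p.natDegree + 1), (p.coeff i • fun x => f x ^ i) := by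
      funext x; simp [Finset.sum_apply]
    rw [e]
    exact Submodule.sum_mem A fun i _ =>
      Submodule.smul_mem A _ (aux_pow_mem A hconst hmul hf i)
  have he : (fun x => p.eval (f x))
      = fun x => ∑ i ∈ Finset.range (p.natDegree + 1), p.coeff i * f x ^ i := by
    funext x
    exact Polynomial.eval_eq_sum_range (f x)
  rw [he]; exact h

lemma aux_abs_mem
    (hbdd : ∀ f ∈ A, ∃ C : ℝ, ∀ x, |f x| ≤ C)
    (hconst : ∀ c : ℝ, (fun _ : Γ => c) ∈ A)
    (hmul : ∀ f ∈ A, ∀ g ∈ A, (fun x => f x * g x) ∈ A)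
    (hclosed : ∀ g : Γ → ℝ, (∀ ε > (0 : ℝ), ∃ f ∈ A, ∀ x, |f x - g x| ≤ ε) → g ∈ A)
    {f : Γ → ℝ} (hf : f ∈ A) : (fun x => |f x|) ∈ A := by
  obtain ⟨C, hC⟩ := hbdd f hf
  apply hclosed
  intro ε hε
  obtain ⟨p, hp⟩ := exists_polynomial_near_of_continuousOn (-C) C (fun t => |t|)
    (continuous_abs.continuousOn) ε hε
  refine ⟨fun x => p.eval (f x), aux_poly_mem A hconst hmul hf p, fun x => ?_⟩
  have hx : f x ∈ Set.Icc (-C) C := abs_le.mp (hC x)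
  exact le_of_lt (hp (f x) hx)

lemma aux_min_mem
    (hbdd : ∀ f ∈ A, ∃ C : ℝ, ∀ x, |f x| ≤ C)
    (hconst : ∀ c : ℝ, (fun _ : Γ => c) ∈ A)
    (hmul : ∀ f ∈ A, ∀ g ∈ A, (fun x => f x * g x) ∈ A)
    (hclosed : ∀ g : Γ → ℝ, (∀ ε > (0 : ℝ), ∃ f ∈ A, ∀ x, |f x - g x| ≤ ε) → g ∈ A)
    {f g : Γ → ℝ} (hf : f ∈ A) (hg : g ∈ A) :
    (fun x => min (f x) (g x)) ∈ A := by
  have hsub : (f - g) ∈ A := Submodule.sub_mem A hf hg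
  have habs : (fun x => |f x - g x|) ∈ A := by
    have := aux_abs_mem A hbdd hconst hmul hclosed hsub
    simpa using this
  have e : (fun x => min (f x) (g x))
      = (2⁻¹ : ℝ) • (f + g - fun x => |f x - g x|) := by
    funext x
    simp only [Pi.smul_apply, Pi.sub_apply, Pi.add_apply, smul_eq_mul]
    rcases le_total (f x) (g x) with h | h
    · rw [min_eq_left h, abs_of_nonpos (by linarith)]; ring
    · rw [min_eq_right h, abs_of_nonneg (by linarith)]; ring
  rw [e]
  exact Submodule.smul_mem A _ (Submodule.sub_mem A (Submodule.add_mem A hf hg) habs)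

lemma aux_max_mem
    (hbdd : ∀ f ∈ A, ∃ C : ℝ, ∀ x, |f x| ≤ C)
    (hconst : ∀ c : ℝ, (fun _ : Γ => c) ∈ A)
    (hmul : ∀ f ∈ A, ∀ g ∈ A, (fun x => f x * g x) ∈ A)
    (hclosed : ∀ g : Γ → ℝ, (∀ ε > (0 : ℝ), ∃ f ∈ A, ∀ x, |f x - g x| ≤ ε) → g ∈ A)
    {f g : Γ → ℝ} (hf : f ∈ A) (hg : g ∈ A) :
    (fun x => max (f x) (g x)) ∈ A := by
  have hmin : (fun x => min (-f x) (-g x)) ∈ A :=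
    aux_min_mem A hbdd hconst hmul hclosed (Submodule.neg_mem A hf) (Submodule.neg_mem A hg)
  have e : (fun x => max (f x) (g x)) = -(fun x => min (-f x) (-g x)) := by
    funext x
    simp [min_neg_neg]
  rw [e]
  exact Submodule.neg_mem A hmin

end aux

set_option maxHeartbeats 1600000 in
/-- Let `A` be a norm-closed subalgebra of `ℓ^∞(Γ)` containing the constant functions, and
let `𝒜 = { [f > 0] : f ∈ A }`. Then `𝒜` contains `∅` and `Γ`, and is closed under finite
intersections and countable unions. -/
theorem stmt9 {Γ : Type*} (A : Submodule ℝ (Γ → ℝ))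
    (hbdd : ∀ f ∈ A, ∃ C : ℝ, ∀ x, |f x| ≤ C)
    (hconst : ∀ c : ℝ, (fun _ : Γ => c) ∈ A)
    (hmul : ∀ f ∈ A, ∀ g ∈ A, (fun x => f x * g x) ∈ A)
    (hclosed : ∀ g : Γ → ℝ, (∀ ε > (0 : ℝ), ∃ f ∈ A, ∀ x, |f x - g x| ≤ ε) → g ∈ A) :
    ∅ ∈ posSets (A : Set (Γ → ℝ)) ∧
    Set.univ ∈ posSets (A : Set (Γ → ℝ)) ∧
    (∀ S ∈ posSets (A : Set (Γ → ℝ)), ∀ T ∈ posSets (A : Set (Γ → ℝ)),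
      S ∩ T ∈ posSets (A : Set (Γ → ℝ))) ∧
    (∀ S : ℕ → Set Γ, (∀ n, S n ∈ posSets (A : Set (Γ → ℝ))) →
      (⋃ n, S n) ∈ posSets (A : Set (Γ → ℝ))) := by
  refine ⟨⟨fun _ => (-1 : ℝ), hconst _, by ext x; norm_num⟩,
    ⟨fun _ => (1 : ℝ), hconst _, by ext x; simp⟩, ?_, ?_⟩
  · rintro S ⟨f, hf, rfl⟩ T ⟨g, hg, rfl⟩
    refine ⟨fun x => min (f x) (g x), aux_min_mem A hbdd hconst hmul hclosed hf hg, ?_⟩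
    ext x
    simp [lt_min_iff, Set.mem_inter_iff]
  · intro S hS
    choose f hfA hfS using hS
    -- truncated positive parts
    set h : ℕ → Γ → ℝ := fun n x => min (max (f n x) 0) 1 with hh
    have hhA : ∀ n, h n ∈ A := by
      intro n
      have hmax : (fun x => max (f n x) 0) ∈ A := by
        have := aux_max_mem A hbdd hconst hmul hclosed (hfA n) (hconst 0)
        simpa using this
      have := aux_min_mem A hbdd hconst hmul hclosed hmax (hconst 1)
      simpa [hh] using this
    have hh0 : ∀ n x, 0 ≤ h n x := fun n x => le_min (le_max_right _ _) zero_le_one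
    have hh1 : ∀ n x, h n x ≤ 1 := fun n x => min_le_right _ _
    have hhpos : ∀ n x, 0 < h n x ↔ 0 < f n x := by
      intro n x
      simp [hh, lt_min_iff, lt_max_iff]
    -- the summands
    set a : ℕ → Γ → ℝ := fun n x => (1 / 2 : ℝ) ^ (n + 1) * h n x with ha
    have hsumgeo : Summable (fun n : ℕ => (1 / 2 : ℝ) ^ (n + 1)) := by
      simpa [pow_succ, mul_comm] using summable_geometric_two.mul_left (1 / 2 : ℝ)
    have ha0 : ∀ n x, 0 ≤ a n x := fun n x =>
      mul_nonneg (by positivity) (hh0 n x)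
    have hale : ∀ n x, a n x ≤ (1 / 2 : ℝ) ^ (n + 1) := by
      intro n x
      calc a n x ≤ (1 / 2 : ℝ) ^ (n + 1) * 1 := by
            exact mul_le_mul_of_nonneg_left (hh1 n x) (by positivity)
        _ = (1 / 2 : ℝ) ^ (n + 1) := mul_one _
    have hsum : ∀ x, Summable (fun n => a n x) := fun x =>
      Summable.of_nonneg_of_le (fun n => ha0 n x) (fun n => hale n x) hsumgeo
    -- the limit function
    set g : Γ → ℝ := fun x => ∑' n, a n x with hg
    have hgA : g ∈ A := by
      apply hclosed
      intro ε hε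
      obtain ⟨N, hN⟩ := exists_pow_lt_of_lt_one hε (by norm_num : (1 / 2 : ℝ) < 1)
      refine ⟨fun x => ∑ n ∈ Finset.range N, a n x, ?_, ?_⟩
      · have e : (fun x => ∑ n ∈ Finset.range N, a n x)
            = ∑ n ∈ Finset.range N, ((1 / 2 : ℝ) ^ (n + 1) • h n) := by
          funext x; simp [ha, Finset.sum_apply]
        rw [e]
        exact Submodule.sum_mem A fun n _ => Submodule.smul_mem A _ (hhA n)
      · intro x
        have hsplit := (Summable.sum_add_tsum_nat_add N (hsum x)).symm
        have htail_nonneg : 0 ≤ ∑' i, a (i + N) x :=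
          tsum_nonneg fun i => ha0 _ x
        have htail_le : ∑' i, a (i + N) x ≤ (1 / 2 : ℝ) ^ N := by
          have h1 : ∑' i, a (i + N) x ≤ ∑' i : ℕ, (1 / 2 : ℝ) ^ (i + N + 1) := by
            exact Summable.tsum_le_tsum (fun i => hale _ x) ((summable_nat_add_iff N).2 (hsum x))
              ((summable_nat_add_iff N).2 hsumgeo)
          have h2 : ∑' i : ℕ, (1 / 2 : ℝ) ^ (i + N + 1)
              = (1 / 2 : ℝ) ^ (N + 1) * ∑' i : ℕ, (1 / 2 : ℝ) ^ i := by
            rw [← tsum_mul_left]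
            congr 1; funext i; ring
          have h3 : ∑' i : ℕ, (1 / 2 : ℝ) ^ i = 2 := tsum_geometric_two
          calc ∑' i, a (i + N) x ≤ (1 / 2 : ℝ) ^ (N + 1) * 2 := by rw [h2, h3] at h1; exact h1
            _ = (1 / 2 : ℝ) ^ N := by ring
        have hgx : g x = ∑' n, a n x := rfl
        have : (∑ n ∈ Finset.range N, a n x) - g x = -(∑' i, a (i + N) x) := by
          rw [hgx, hsplit]; ring
        rw [this, abs_neg, abs_of_nonneg htail_nonneg]
        exact htail_le.trans (le_of_lt hN)
    refine ⟨g, hgA, ?_⟩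
    ext x
    simp only [Set.mem_iUnion, Set.mem_setOf_eq]
    constructor
    · rintro ⟨n, hn⟩
      rw [hfS n] at hn
      have hfn : 0 < f n x := hn
      have : 0 < a n x := mul_pos (by positivity) ((hhpos n x).2 hfn)
      exact this.trans_le (Summable.le_tsum (hsum x) n fun m _ => ha0 m x)
    · intro hx
      by_contra hc
      push_neg at hc
      have hzero : ∀ n, a n x = 0 := by
        intro n
        have : ¬ 0 < f n x := by
          intro hpos
          exact hc n (by rw [hfS n]; exact hpos)
        have hle : h n x ≤ 0 := not_lt.mp (fun h' => this ((hhpos n x).1 h'))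
        have hz : h n x = 0 := le_antisymm hle (hh0 n x)
        simp [ha, hz]
      have : g x = 0 := by
        calc g x = ∑' _ : ℕ, (0 : ℝ) := tsum_congr hzero
          _ = 0 := tsum_zero
      rw [this] at hx
      exact lt_irrefl 0 hx
end

section
/- Let Γ be a set and let ℬ be a family of subsets of Γ containing ∅ and Γ and closed under countable unions and finite intersections. Let Y denote the space of all bounded ℬ-measurable real functions on Γ (f is ℬ-measurable if [f > c] ∈ ℬ and [f < c] ∈ ℬ for every real c). Then Y equals the set of bounded functions which are simultaneously a pointwise limit of a bounded nondecreasing sequence from Y and a pointwise limit of a bounded nonincreasing sequence from Y; moreover Y equals the intersection of the uniform closures of these two sets: Y = Y↑ ∩ Y↓ = cl(Y↑) ∩ cl(Y↓). -/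
open Filter Topology

/-- Pointwise limits of uniformly bounded nondecreasing sequences from `F`. -/
def upLim {Γ : Type*} (F : Set (Γ → ℝ)) : Set (Γ → ℝ) :=
  {g | ∃ f : ℕ → Γ → ℝ, (∀ n, f n ∈ F) ∧ Monotone f ∧ (∃ C : ℝ, ∀ n x, |f n x| ≤ C) ∧
    ∀ x, Tendsto (fun n => f n x) atTop (𝓝 (g x))}

/-- Pointwise limits of uniformly bounded nonincreasing sequences from `F`. -/
def downLim {Γ : Type*} (F : Set (Γ → ℝ)) : Set (Γ → ℝ) :=
  {g | ∃ f : ℕ → Γ → ℝ, (∀ n, f n ∈ F) ∧ Antitone f ∧ (∃ C : ℝ, ∀ n x, |f n x| ≤ C) ∧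
    ∀ x, Tendsto (fun n => f n x) atTop (𝓝 (g x))}

/-- Uniform (supremum norm) closure of a family of functions. -/
def unifCl {Γ : Type*} (F : Set (Γ → ℝ)) : Set (Γ → ℝ) :=
  {g | ∀ ε > (0 : ℝ), ∃ f ∈ F, ∀ x, |f x - g x| ≤ ε}

/-- The bounded `ℬ`-measurable functions on `Γ`. -/
def measClass {Γ : Type*} (ℬ : Set (Set Γ)) : Set (Γ → ℝ) :=
  {f | (∃ C : ℝ, ∀ x, |f x| ≤ C) ∧ ∀ c : ℝ, {x | c < f x} ∈ ℬ ∧ {x | f x < c} ∈ ℬ}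

/-- A bounded measurable function is in `upLim` via the constant sequence. -/
lemma aux_mem_upLim {Γ : Type*} {ℬ : Set (Set Γ)} {g : Γ → ℝ}
    (hg : g ∈ measClass ℬ) : g ∈ upLim (measClass ℬ) := by
  obtain ⟨C, hC⟩ := hg.1
  exact ⟨fun _ => g, fun _ => hg, monotone_const, ⟨C, fun n x => hC x⟩,
    fun x => tendsto_const_nhds⟩

lemma aux_mem_downLim {Γ : Type*} {ℬ : Set (Set Γ)} {g : Γ → ℝ}
    (hg : g ∈ measClass ℬ) : g ∈ downLim (measClass ℬ) := by
  obtain ⟨C, hC⟩ := hg.1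
  exact ⟨fun _ => g, fun _ => hg, antitone_const, ⟨C, fun n x => hC x⟩,
    fun x => tendsto_const_nhds⟩

lemma aux_subset_unifCl {Γ : Type*} (F : Set (Γ → ℝ)) : F ⊆ unifCl F := by
  intro g hg ε hε
  exact ⟨g, hg, fun x => by simp [le_of_lt hε]⟩

/-- Upper level sets of members of `upLim` are in `ℬ`. -/
lemma aux_upLim_upper {Γ : Type*} {ℬ : Set (Set Γ)}
    (hunion : ∀ S : ℕ → Set Γ, (∀ n, S n ∈ ℬ) → (⋃ n, S n) ∈ ℬ)
    {h : Γ → ℝ} (hh : h ∈ upLim (measClass ℬ)) (c : ℝ) :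
    {x | c < h x} ∈ ℬ := by
  obtain ⟨f, hf, hmono, _, hlim⟩ := hh
  have heq : {x | c < h x} = ⋃ n, {x | c < f n x} := by
    ext x
    simp only [Set.mem_setOf_eq, Set.mem_iUnion]
    constructor
    · intro hx
      exact ((hlim x).eventually (eventually_gt_nhds hx)).exists
    · rintro ⟨n, hn⟩
      have hle : f n x ≤ h x :=
        Monotone.ge_of_tendsto (fun a b hab => hmono hab x) (hlim x) n
      exact lt_of_lt_of_le hn hle
  rw [heq]
  exact hunion _ fun n => ((hf n).2 c).1

/-- Lower level sets of members of `downLim` are in `ℬ`. -/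
lemma aux_downLim_lower {Γ : Type*} {ℬ : Set (Set Γ)}
    (hunion : ∀ S : ℕ → Set Γ, (∀ n, S n ∈ ℬ) → (⋃ n, S n) ∈ ℬ)
    {h : Γ → ℝ} (hh : h ∈ downLim (measClass ℬ)) (c : ℝ) :
    {x | h x < c} ∈ ℬ := by
  obtain ⟨f, hf, hanti, _, hlim⟩ := hh
  have heq : {x | h x < c} = ⋃ n, {x | f n x < c} := by
    ext x
    simp only [Set.mem_setOf_eq, Set.mem_iUnion]
    constructor
    · intro hx
      exact ((hlim x).eventually (eventually_lt_nhds hx)).exists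
    · rintro ⟨n, hn⟩
      have hle : h x ≤ f n x :=
        Antitone.le_of_tendsto (fun a b hab => hanti hab x) (hlim x) n
      exact lt_of_le_of_lt hle hn
  rw [heq]
  exact hunion _ fun n => ((hf n).2 c).2

/-- Members of `upLim` (and their uniform closure) are bounded. -/
lemma aux_upLim_bdd {Γ : Type*} {ℬ : Set (Set Γ)} {h : Γ → ℝ}
    (hh : h ∈ upLim (measClass ℬ)) : ∃ C : ℝ, ∀ x, |h x| ≤ C := by
  obtain ⟨f, _, _, ⟨C, hC⟩, hlim⟩ := hh
  refine ⟨C, fun x => ?_⟩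
  exact le_of_tendsto ((hlim x).abs) (Eventually.of_forall fun n => hC n x)

lemma aux_unifCl_bdd {Γ : Type*} {ℬ : Set (Set Γ)} {g : Γ → ℝ}
    (hg : g ∈ unifCl (upLim (measClass ℬ))) : ∃ C : ℝ, ∀ x, |g x| ≤ C := by
  obtain ⟨h, hh, hcl⟩ := hg 1 one_pos
  obtain ⟨C, hC⟩ := aux_upLim_bdd hh
  refine ⟨C + 1, fun x => ?_⟩
  calc |g x| = |h x - (h x - g x)| := by ring_nf
    _ ≤ |h x| + |h x - g x| := abs_sub _ _
    _ ≤ C + 1 := add_le_add (hC x) (hcl x)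

/-- helper: for `0 < δ` there is `k` with `2/(k+1) < δ`. -/
lemma aux_two_div_lt {δ : ℝ} (hδ : 0 < δ) : ∃ k : ℕ, 2 / ((k : ℝ) + 1) < δ := by
  obtain ⟨k, hk⟩ := exists_nat_gt (2 / δ)
  refine ⟨k, ?_⟩
  rw [div_lt_iff₀ (by positivity)]
  rw [div_lt_iff₀ hδ] at hk
  nlinarith [hδ.le, Nat.cast_nonneg (α := ℝ) k]

/-- Upper level sets of members of `unifCl (upLim Y)` are in `ℬ`. -/
lemma aux_cl_up_upper {Γ : Type*} {ℬ : Set (Set Γ)}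
    (hunion : ∀ S : ℕ → Set Γ, (∀ n, S n ∈ ℬ) → (⋃ n, S n) ∈ ℬ)
    {g : Γ → ℝ} (hg : g ∈ unifCl (upLim (measClass ℬ))) (c : ℝ) :
    {x | c < g x} ∈ ℬ := by
  have H : ∀ k : ℕ, ∃ h ∈ upLim (measClass ℬ), ∀ x, |h x - g x| ≤ 1 / ((k : ℝ) + 1) :=
    fun k => hg (1 / ((k : ℝ) + 1)) (by positivity)
  choose h hmem hcl using H
  have heq : {x | c < g x} = ⋃ k : ℕ, {x | c + 1 / ((k : ℝ) + 1) < h k x} := by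
    ext x
    simp only [Set.mem_setOf_eq, Set.mem_iUnion]
    constructor
    · intro hx
      obtain ⟨k, hk⟩ := aux_two_div_lt (sub_pos.mpr hx)
      refine ⟨k, ?_⟩
      have h1 := (abs_le.mp (hcl k x)).1
      have h2 : (0:ℝ) < (k : ℝ) + 1 := by positivity
      rw [div_lt_iff₀ h2] at hk
      have : 1 / ((k : ℝ) + 1) * ((k : ℝ) + 1) = 1 := by field_simp
      nlinarith [h1]
    · rintro ⟨k, hk⟩
      have h1 := (abs_le.mp (hcl k x)).2
      linarith
  rw [heq]
  exact hunion _ fun k => aux_upLim_upper hunion (hmem k) _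

/-- Lower level sets of members of `unifCl (downLim Y)` are in `ℬ`. -/
lemma aux_cl_down_lower {Γ : Type*} {ℬ : Set (Set Γ)}
    (hunion : ∀ S : ℕ → Set Γ, (∀ n, S n ∈ ℬ) → (⋃ n, S n) ∈ ℬ)
    {g : Γ → ℝ} (hg : g ∈ unifCl (downLim (measClass ℬ))) (c : ℝ) :
    {x | g x < c} ∈ ℬ := by
  have H : ∀ k : ℕ, ∃ h ∈ downLim (measClass ℬ), ∀ x, |h x - g x| ≤ 1 / ((k : ℝ) + 1) :=
    fun k => hg (1 / ((k : ℝ) + 1)) (by positivity)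
  choose h hmem hcl using H
  have heq : {x | g x < c} = ⋃ k : ℕ, {x | h k x < c - 1 / ((k : ℝ) + 1)} := by
    ext x
    simp only [Set.mem_setOf_eq, Set.mem_iUnion]
    constructor
    · intro hx
      obtain ⟨k, hk⟩ := aux_two_div_lt (sub_pos.mpr hx)
      refine ⟨k, ?_⟩
      have h1 := (abs_le.mp (hcl k x)).2
      have h2 : (0:ℝ) < (k : ℝ) + 1 := by positivity
      rw [div_lt_iff₀ h2] at hk
      have : 1 / ((k : ℝ) + 1) * ((k : ℝ) + 1) = 1 := by field_simp
      nlinarith [h1]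
    · rintro ⟨k, hk⟩
      have h1 := (abs_le.mp (hcl k x)).1
      linarith
  rw [heq]
  exact hunion _ fun k => aux_downLim_lower hunion (hmem k) _

/-- Let `ℬ` be a family of subsets of `Γ` containing `∅` and `Γ` and closed under countable
unions and finite intersections, and let `Y` be the space of bounded `ℬ`-measurable functions.
Then `Y = Y↑ ∩ Y↓ = cl(Y↑) ∩ cl(Y↓)`. -/
theorem stmt10 {Γ : Type*} (ℬ : Set (Set Γ))
    (hempty : ∅ ∈ ℬ) (huniv : Set.univ ∈ ℬ)
    (hunion : ∀ S : ℕ → Set Γ, (∀ n, S n ∈ ℬ) → (⋃ n, S n) ∈ ℬ)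
    (hinter : ∀ S ∈ ℬ, ∀ T ∈ ℬ, S ∩ T ∈ ℬ) :
    measClass ℬ = upLim (measClass ℬ) ∩ downLim (measClass ℬ) ∧
    measClass ℬ = unifCl (upLim (measClass ℬ)) ∩ unifCl (downLim (measClass ℬ)) := by
  have key : unifCl (upLim (measClass ℬ)) ∩ unifCl (downLim (measClass ℬ)) ⊆ measClass ℬ := by
    rintro g ⟨hgu, hgd⟩
    exact ⟨aux_unifCl_bdd hgu, fun c =>
      ⟨aux_cl_up_upper hunion hgu c, aux_cl_down_lower hunion hgd c⟩⟩
  constructor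
  · apply Set.Subset.antisymm
    · intro g hg
      exact ⟨aux_mem_upLim hg, aux_mem_downLim hg⟩
    · rintro g ⟨hgu, hgd⟩
      exact key ⟨aux_subset_unifCl _ hgu, aux_subset_unifCl _ hgd⟩
  · apply Set.Subset.antisymm
    · intro g hg
      exact ⟨aux_subset_unifCl _ (aux_mem_upLim hg), aux_subset_unifCl _ (aux_mem_downLim hg)⟩
    · exact key
end

section
/- Let f : [0,1] → ℝ be a pointwise limit of a sequence of continuous functions (a Baire-one function) such that the restrictions f|_ℚ∩[0,1] and f|_{[0,1]∖ℚ} are continuous (as functions on these subspaces). Then f is continuous on [0,1]. -/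
open Filter Topology

/-- Weak Baire-one property: on every nonempty closed subset of `[0,1]`, a pointwise limit of
continuous functions has a relatively open set of small oscillation around some point. -/
lemma weak_baire_pt (f : ℝ → ℝ) (g : ℕ → ℝ → ℝ)
    (hg : ∀ n, ContinuousOn (g n) (Set.Icc (0 : ℝ) 1))
    (hlim : ∀ x ∈ Set.Icc (0 : ℝ) 1, Tendsto (fun n => g n x) atTop (𝓝 (f x)))
    (P : Set ℝ) (hPc : IsClosed P) (hPne : P.Nonempty) (hPsub : P ⊆ Set.Icc (0 : ℝ) 1)
    (ε : ℝ) (hε : 0 < ε) :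
    ∃ z₀ ∈ P, ∃ ρ > (0 : ℝ), ∀ w ∈ P, dist w z₀ < ρ → dist (f w) (f z₀) ≤ ε := by
  classical
  set F : ℕ → Set ℝ :=
    fun n => {x | x ∈ P ∧ ∀ p q, n ≤ p → n ≤ q → dist (g p x) (g q x) ≤ ε / 4} with hF
  have hFsubP : ∀ n, F n ⊆ P := fun n x hx => hx.1
  -- each F n is closed
  have hFclosed : ∀ n, IsClosed (F n) := by
    intro n
    have heq : F n = ⋂ (p : ℕ) (q : ℕ) (_ : n ≤ p) (_ : n ≤ q),
        (P ∩ (fun x => dist (g p x) (g q x)) ⁻¹' Set.Iic (ε / 4)) := by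
      ext x
      simp only [hF, Set.mem_setOf_eq, Set.mem_iInter, Set.mem_inter_iff, Set.mem_preimage,
        Set.mem_Iic]
      constructor
      · rintro ⟨hxP, h⟩ p q hp hq
        exact ⟨hxP, h p q hp hq⟩
      · intro h
        exact ⟨(h n n le_rfl le_rfl).1, fun p q hp hq => (h p q hp hq).2⟩
    rw [heq]
    refine isClosed_iInter fun p => isClosed_iInter fun q =>
      isClosed_iInter fun _ => isClosed_iInter fun _ => ?_
    have hfeq : (fun x => dist (g p x) (g q x)) = fun x => |g p x - g q x| :=
      funext fun x => Real.dist_eq _ _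
    have hcont : ContinuousOn (fun x => |g p x - g q x|) P :=
      (((hg p).mono hPsub).sub ((hg q).mono hPsub)).abs
    rw [hfeq]
    exact hcont.preimage_isClosed_of_isClosed hPc isClosed_Iic
  -- the F n cover P
  have hcover : ∀ x ∈ P, ∃ n, x ∈ F n := by
    intro x hx
    have ht := hlim x (hPsub hx)
    rw [Metric.tendsto_atTop] at ht
    obtain ⟨N, hN⟩ := ht (ε / 8) (by linarith)
    refine ⟨N, hx, fun p q hp hq => ?_⟩
    have h1 := hN p hp
    have h2 := hN q hq
    have := dist_triangle (g p x) (f x) (g q x)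
    have hc : dist (f x) (g q x) = dist (g q x) (f x) := dist_comm _ _
    linarith
  -- Baire category on the complete space P
  haveI : Nonempty P := hPne.to_subtype
  haveI : CompleteSpace P := hPc.completeSpace_coe
  obtain ⟨n, hn⟩ := nonempty_interior_of_iUnion_of_closed
    (f := fun n => ((↑) : P → ℝ) ⁻¹' F n)
    (fun n => (hFclosed n).preimage continuous_subtype_val)
    (by
      ext x
      simp only [Set.mem_iUnion, Set.mem_preimage, Set.mem_univ, iff_true]
      exact hcover x x.2)
  obtain ⟨⟨z₀, hz₀P⟩, hz₀⟩ := hn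
  rw [mem_interior_iff_mem_nhds, Metric.mem_nhds_iff] at hz₀
  obtain ⟨ρ₀, hρ₀, hball⟩ := hz₀
  -- continuity of g n at z₀
  have hgc := (hg n z₀ (hPsub hz₀P))
  rw [Metric.continuousWithinAt_iff] at hgc
  obtain ⟨ρ₁, hρ₁, hρ₁c⟩ := hgc (ε / 4) (by linarith)
  -- f is close to g n on F n
  have hfg : ∀ x ∈ F n, dist (f x) (g n x) ≤ ε / 4 := by
    intro x hx
    have ht : Tendsto (fun p => dist (g p x) (g n x)) atTop (𝓝 (dist (f x) (g n x))) :=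
      ((hlim x (hPsub (hFsubP n hx))).dist tendsto_const_nhds)
    refine le_of_tendsto ht ?_
    filter_upwards [eventually_ge_atTop n] with p hp
    exact hx.2 p n hp le_rfl
  refine ⟨z₀, hz₀P, min ρ₀ ρ₁, lt_min hρ₀ hρ₁, fun w hw hwd => ?_⟩
  have hwF : w ∈ F n := by
    have : (⟨w, hw⟩ : P) ∈ Metric.ball (⟨z₀, hz₀P⟩ : P) ρ₀ := by
      rw [Metric.mem_ball, Subtype.dist_eq]
      exact lt_of_lt_of_le hwd (min_le_left _ _)
    exact hball this
  have hz₀F : z₀ ∈ F n := by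
    have : (⟨z₀, hz₀P⟩ : P) ∈ Metric.ball (⟨z₀, hz₀P⟩ : P) ρ₀ := by
      rw [Metric.mem_ball, Subtype.dist_eq]
      simpa using hρ₀
    exact hball this
  have h1 := hfg w hwF
  have h2 := hfg z₀ hz₀F
  have h3 : dist (g n w) (g n z₀) < ε / 4 :=
    hρ₁c (hPsub hw) (lt_of_lt_of_le hwd (min_le_right _ _))
  have h4 := dist_triangle4 (f w) (g n w) (g n z₀) (f z₀)
  have h5 : dist (g n z₀) (f z₀) = dist (f z₀) (g n z₀) := dist_comm _ _
  linarith

/-- Main auxiliary argument, with `A` standing for either the rationals or the irrationals. -/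
lemma aux_cont (f : ℝ → ℝ) (g : ℕ → ℝ → ℝ)
    (hg : ∀ n, ContinuousOn (g n) (Set.Icc (0 : ℝ) 1))
    (hlim : ∀ x ∈ Set.Icc (0 : ℝ) 1, Tendsto (fun n => g n x) atTop (𝓝 (f x)))
    (A : Set ℝ)
    (hA : ContinuousOn f (Set.Icc (0 : ℝ) 1 ∩ A))
    (hB : ContinuousOn f (Set.Icc (0 : ℝ) 1 \ A))
    (hAd : ∀ s t : ℝ, s < t → ∃ x ∈ A, s < x ∧ x < t)
    (hBd : ∀ s t : ℝ, s < t → ∃ x ∉ A, s < x ∧ x < t)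
    (a : ℝ) (ha : a ∈ Set.Icc (0 : ℝ) 1) (haA : a ∈ A) :
    ContinuousWithinAt f (Set.Icc (0 : ℝ) 1) a := by
  rw [Metric.continuousWithinAt_iff]
  intro ε hε
  by_contra hcon
  push_neg at hcon
  -- continuity along A at a
  obtain ⟨r, hr, hAr⟩ := Metric.continuousWithinAt_iff.1 (hA a ⟨ha, haA⟩) (ε / 8) (by linarith)
  -- a bad point y near a
  obtain ⟨y, hyIcc, hyr, hyf⟩ := hcon r hr
  have hyA : y ∉ A := by
    intro h
    have := hAr ⟨hyIcc, h⟩ hyr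
    linarith
  -- continuity along the complement at y
  obtain ⟨δ₁', hδ₁', hBy⟩ :=
    Metric.continuousWithinAt_iff.1 (hB y ⟨hyIcc, hyA⟩) (ε / 8) (by linarith)
  set δ₁ := min δ₁' (r - dist y a) with hδ₁def
  have hδ₁ : 0 < δ₁ := lt_min hδ₁' (by linarith)
  have hδ₁le : δ₁ ≤ δ₁' := min_le_left _ _
  have hδ₁le' : δ₁ ≤ r - dist y a := min_le_right _ _
  set c := max 0 (y - δ₁ / 2) with hcdef
  set d := min 1 (y + δ₁ / 2) with hddef
  have hy0 : (0 : ℝ) ≤ y := hyIcc.1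
  have hy1 : y ≤ 1 := hyIcc.2
  have hcd : c < d := by
    rw [hcdef, hddef]
    rw [max_lt_iff]
    constructor
    · rw [lt_min_iff]; constructor <;> linarith
    · rw [lt_min_iff]; constructor <;> linarith
  have hyP : y ∈ Set.Icc c d := by
    constructor
    · exact max_le hy0 (by linarith)
    · exact le_min hy1 (by linarith)
  have hPsub : Set.Icc c d ⊆ Set.Icc (0 : ℝ) 1 :=
    Set.Icc_subset_Icc (le_max_left _ _) (min_le_left _ _)
  -- every point of P is δ₁-close to y and r-close to a
  have hPy : ∀ x ∈ Set.Icc c d, dist x y < δ₁ ∧ dist x a < r := by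
    intro x hx
    have h1 : y - δ₁ / 2 ≤ x := le_trans (le_max_right _ _) hx.1
    have h2 : x ≤ y + δ₁ / 2 := le_trans hx.2 (min_le_right _ _)
    have hxy : dist x y < δ₁ := by
      rw [Real.dist_eq, abs_lt]; constructor <;> linarith
    refine ⟨hxy, ?_⟩
    have := dist_triangle x y a
    linarith
  -- weak Baire point on P
  obtain ⟨z₀, hz₀P, ρ, hρ, hwb⟩ := weak_baire_pt f g hg hlim (Set.Icc c d) isClosed_Icc
    ⟨y, hyP⟩ hPsub (ε / 8) (by linarith)
  -- a nondegenerate interval inside P ∩ ball(z₀, ρ)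
  set s := max c (z₀ - ρ) with hsdef
  set t := min d (z₀ + ρ) with htdef
  have hz₀c : c ≤ z₀ := hz₀P.1
  have hz₀d : z₀ ≤ d := hz₀P.2
  have hst : s < t := by
    rw [hsdef, htdef, max_lt_iff]
    constructor
    · rw [lt_min_iff]; constructor <;> linarith
    · rw [lt_min_iff]; constructor <;> linarith
  have hmem : ∀ x : ℝ, s < x → x < t → x ∈ Set.Icc c d ∧ dist x z₀ < ρ := by
    intro x hxs hxt
    have h1 : c ≤ x := le_of_lt (lt_of_le_of_lt (le_max_left _ _) hxs)
    have h2 : x ≤ d := le_of_lt (lt_of_lt_of_le hxt (min_le_left _ _))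
    have h3 : z₀ - ρ < x := lt_of_le_of_lt (le_max_right _ _) hxs
    have h4 : x < z₀ + ρ := lt_of_lt_of_le hxt (min_le_right _ _)
    refine ⟨⟨h1, h2⟩, ?_⟩
    rw [Real.dist_eq, abs_lt]; constructor <;> linarith
  obtain ⟨q, hqA, hqs, hqt⟩ := hAd s t hst
  obtain ⟨z, hzA, hzs, hzt⟩ := hBd s t hst
  obtain ⟨hqP, hqz₀⟩ := hmem q hqs hqt
  obtain ⟨hzP, hzz₀⟩ := hmem z hzs hzt
  -- the four distance estimates
  have e1 : dist (f q) (f a) < ε / 8 := hAr ⟨hPsub hqP, hqA⟩ (hPy q hqP).2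
  have e2 : dist (f z) (f y) < ε / 8 :=
    hBy ⟨hPsub hzP, hzA⟩ (lt_of_lt_of_le (hPy z hzP).1 hδ₁le)
  have e3 : dist (f q) (f z₀) ≤ ε / 8 := hwb q hqP hqz₀
  have e4 : dist (f z) (f z₀) ≤ ε / 8 := hwb z hzP hzz₀
  -- contradiction
  have t1 := dist_triangle4 (f y) (f z) (f q) (f a)
  have t2 := dist_triangle (f z) (f z₀) (f q)
  have c1 : dist (f y) (f z) = dist (f z) (f y) := dist_comm _ _
  have c2 : dist (f z₀) (f q) = dist (f q) (f z₀) := dist_comm _ _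
  linarith

/-- If `f : [0,1] → ℝ` is a Baire-one function (a pointwise limit of a sequence of continuous
functions) whose restrictions to the rationals of `[0,1]` and to the irrationals of `[0,1]`
are both continuous, then `f` is continuous on `[0,1]`. -/
theorem stmt12 (f : ℝ → ℝ)
    (hBaire : ∃ g : ℕ → ℝ → ℝ, (∀ n, ContinuousOn (g n) (Set.Icc (0 : ℝ) 1)) ∧
      ∀ x ∈ Set.Icc (0 : ℝ) 1, Tendsto (fun n => g n x) atTop (𝓝 (f x)))
    (hQ : ContinuousOn f (Set.Icc (0 : ℝ) 1 ∩ Set.range ((↑) : ℚ → ℝ)))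
    (hI : ContinuousOn f (Set.Icc (0 : ℝ) 1 \ Set.range ((↑) : ℚ → ℝ))) :
    ContinuousOn f (Set.Icc (0 : ℝ) 1) := by
  obtain ⟨g, hg, hlim⟩ := hBaire
  intro a ha
  have hratd : ∀ s t : ℝ, s < t → ∃ x ∈ Set.range ((↑) : ℚ → ℝ), s < x ∧ x < t := by
    intro s t h
    obtain ⟨q, h1, h2⟩ := exists_rat_btwn h
    exact ⟨(q : ℝ), ⟨q, rfl⟩, h1, h2⟩
  have hirrd : ∀ s t : ℝ, s < t → ∃ x ∉ Set.range ((↑) : ℚ → ℝ), s < x ∧ x < t := by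
    intro s t h
    obtain ⟨x, hx, h1, h2⟩ := exists_irrational_btwn h
    exact ⟨x, hx, h1, h2⟩
  by_cases haA : a ∈ Set.range ((↑) : ℚ → ℝ)
  · exact aux_cont f g hg hlim _ hQ hI hratd hirrd a ha haA
  · have hA' : ContinuousOn f (Set.Icc (0 : ℝ) 1 ∩ (Set.range ((↑) : ℚ → ℝ))ᶜ) := by
      rwa [← Set.diff_eq]
    have hB' : ContinuousOn f (Set.Icc (0 : ℝ) 1 \ (Set.range ((↑) : ℚ → ℝ))ᶜ) := by
      rwa [Set.diff_compl]
    have hAd' : ∀ s t : ℝ, s < t → ∃ x ∈ (Set.range ((↑) : ℚ → ℝ))ᶜ, s < x ∧ x < t := hirrd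
    have hBd' : ∀ s t : ℝ, s < t → ∃ x ∉ (Set.range ((↑) : ℚ → ℝ))ᶜ, s < x ∧ x < t := by
      intro s t h
      obtain ⟨x, hx, h1, h2⟩ := hratd s t h
      exact ⟨x, by simpa using hx, h1, h2⟩
    exact aux_cont f g hg hlim _ hA' hB' hAd' hBd' a ha haA
end

section
/- Let B be a compact Hausdorff space (or more generally a topological space) and B ⊆ L a subset of a topological space L. If B is scattered (every nonempty subset of B has a point isolated in that subset), then every subset of B is resolvable in L, where a set C is resolvable if its indicator function 1_C is fragmented: for every ε > 0 and every nonempty closed F ⊆ L there is a nonempty relatively open U ⊆ F with diam 1_C(U) < ε. Conversely, if B is not scattered then some subset of B is not resolvable. -/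
open Set Metric

/-- A real function `g` on a topological space `L` is fragmented if for every `ε > 0` and
every nonempty closed `F ⊆ L` there is a nonempty relatively open subset `U = F ∩ V` of `F`
with `diam g(U) < ε`. -/
def Fragmented {L : Type*} [TopologicalSpace L] (g : L → ℝ) : Prop :=
  ∀ ε > (0 : ℝ), ∀ F : Set L, IsClosed F → F.Nonempty →
    ∃ V : Set L, IsOpen V ∧ (F ∩ V).Nonempty ∧ Metric.diam (g '' (F ∩ V)) < ε

/-- A set `C ⊆ L` is resolvable (an `H`-set) if its indicator function is fragmented. -/
def Resolvable {L : Type*} [TopologicalSpace L] (C : Set L) : Prop :=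
  Fragmented (C.indicator fun _ => (1 : ℝ))

/-- A subset `B` of a topological space is scattered if every nonempty subset of `B` has a
point which is isolated in that subset. -/
def ScatteredSet {L : Type*} [TopologicalSpace L] (B : Set L) : Prop :=
  ∀ S ⊆ B, S.Nonempty → ∃ x ∈ S, x ∉ closure (S \ {x})

/-! ### Auxiliary material -/

/-- If both a point of `C` and a point outside `C` lie in `T`, the indicator image has
diameter at least 1. -/
lemma one_le_diam_indicator {L : Type*} {C T : Set L} {a b : L}
    (ha : a ∈ T) (haC : a ∈ C) (hb : b ∈ T) (hbC : b ∉ C) :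
    1 ≤ Metric.diam ((C.indicator fun _ => (1 : ℝ)) '' T) := by
  have hbdd : Bornology.IsBounded ((C.indicator fun _ => (1 : ℝ)) '' T) := by
    apply (Metric.isBounded_Icc (0 : ℝ) 1).subset
    rintro _ ⟨z, -, rfl⟩
    by_cases hz : z ∈ C
    · simp [Set.indicator_of_mem hz]
    · simp [Set.indicator_of_notMem hz]
  have h1 : (1 : ℝ) ∈ (C.indicator fun _ => (1 : ℝ)) '' T :=
    ⟨a, ha, Set.indicator_of_mem haC _⟩
  have h0 : (0 : ℝ) ∈ (C.indicator fun _ => (1 : ℝ)) '' T :=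
    ⟨b, hb, Set.indicator_of_notMem hbC _⟩
  have := Metric.dist_le_diam_of_mem hbdd h1 h0
  simpa using this

section Aux

variable {L : Type*} [TopologicalSpace L]

/-- A set is crowded (dense-in-itself) if none of its points is isolated in it. -/
def Crowded (Q : Set L) : Prop := ∀ x ∈ Q, x ∈ closure (Q \ {x})

lemma crowded_closure_inter {S U : Set L} (hS : Crowded S) (hU : IsOpen U) :
    Crowded (closure (S ∩ U)) := by
  intro y hy
  rw [_root_.mem_closure_iff]
  intro O hO hyO
  rcases _root_.mem_closure_iff.mp hy O hO hyO with ⟨z, hzO, hzS, hzU⟩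
  by_cases hzy : z = y
  · subst hzy
    rcases _root_.mem_closure_iff.mp (hS z hzS) (O ∩ U) (hO.inter hU) ⟨hzO, hzU⟩ with
      ⟨w, ⟨hwO, hwU⟩, hwS, hwz⟩
    exact ⟨w, hwO, subset_closure ⟨hwS, hwU⟩, hwz⟩
  · exact ⟨z, hzO, subset_closure ⟨hzS, hzU⟩, hzy⟩

variable [CompactSpace L] [T2Space L]

lemma exists_split {Q : Set L} (hQcl : IsClosed Q) (hQcr : Crowded Q) (hQne : Q.Nonempty) :
    ∃ p : Bool → Set L,
      (∀ b, IsClosed (p b) ∧ Crowded (p b) ∧ (p b).Nonempty ∧ p b ⊆ Q) ∧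
      Disjoint (p false) (p true) := by
  obtain ⟨x, hx⟩ := hQne
  have hx' := hQcr x hx
  have hne : (Q \ {x}).Nonempty := by
    by_contra h
    rw [not_nonempty_iff_eq_empty] at h
    rw [h, closure_empty] at hx'
    exact hx'
  obtain ⟨y, hyQ, hyx⟩ := hne
  have hxy : x ≠ y := fun h => hyx (by simp [h.symm])
  obtain ⟨U, V, hU, hV, hxU, hyV, hUV⟩ := t2_separation hxy
  obtain ⟨U', hU'm, hU'c, hU's⟩ := exists_mem_nhds_isClosed_subset (hU.mem_nhds hxU)
  obtain ⟨V', hV'm, hV'c, hV's⟩ := exists_mem_nhds_isClosed_subset (hV.mem_nhds hyV)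
  refine ⟨fun b => if b then closure (Q ∩ interior V') else closure (Q ∩ interior U'),
    fun b => ?_, ?_⟩
  · cases b <;>
    · simp only [if_true, if_false]
      refine ⟨isClosed_closure, crowded_closure_inter hQcr isOpen_interior, ?_,
        closure_minimal inter_subset_left hQcl⟩
      · first
        | exact ⟨x, subset_closure ⟨hx, mem_interior_iff_mem_nhds.mpr hU'm⟩⟩
        | exact ⟨y, subset_closure ⟨hyQ, mem_interior_iff_mem_nhds.mpr hV'm⟩⟩
  · simp only [if_true, if_false]
    have h1 : closure (Q ∩ interior U') ⊆ U :=
      ((closure_mono inter_subset_right).trans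
        (closure_minimal interior_subset hU'c)).trans hU's
    have h2 : closure (Q ∩ interior V') ⊆ V :=
      ((closure_mono inter_subset_right).trans
        (closure_minimal interior_subset hV'c)).trans hV's
    exact hUV.mono h1 h2

/-- A choice function splitting a closed crowded nonempty set into two such disjoint pieces. -/
noncomputable def splitFun (Q : Set L) : Bool → Set L :=
  letI := Classical.propDecidable (IsClosed Q ∧ Crowded Q ∧ Q.Nonempty)
  if h : IsClosed Q ∧ Crowded Q ∧ Q.Nonempty then (exists_split h.1 h.2.1 h.2.2).choose
  else fun _ => Q

lemma splitFun_spec {Q : Set L} (hQcl : IsClosed Q) (hQcr : Crowded Q) (hQne : Q.Nonempty) :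
    (∀ b, IsClosed (splitFun Q b) ∧ Crowded (splitFun Q b) ∧ (splitFun Q b).Nonempty ∧
      splitFun Q b ⊆ Q) ∧ Disjoint (splitFun Q false) (splitFun Q true) := by
  have h : IsClosed Q ∧ Crowded Q ∧ Q.Nonempty := ⟨hQcl, hQcr, hQne⟩
  classical
  simp only [splitFun, dif_pos h]
  exact (exists_split h.1 h.2.1 h.2.2).choose_spec

/-- Cantor scheme: iterate the splitting along a list of booleans (most recent first). -/
noncomputable def scheme (P : Set L) : List Bool → Set L
  | [] => P
  | b :: t => splitFun (scheme P t) b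

lemma scheme_spec {P : Set L} (hP : IsClosed P ∧ Crowded P ∧ P.Nonempty) :
    ∀ t : List Bool, IsClosed (scheme P t) ∧ Crowded (scheme P t) ∧ (scheme P t).Nonempty
  | [] => hP
  | b :: t => by
    have ih := scheme_spec hP t
    have := (splitFun_spec ih.1 ih.2.1 ih.2.2).1 b
    exact ⟨this.1, this.2.1, this.2.2.1⟩

lemma scheme_subset {P : Set L} (hP : IsClosed P ∧ Crowded P ∧ P.Nonempty)
    (b : Bool) (t : List Bool) : scheme P (b :: t) ⊆ scheme P t := by
  have ih := scheme_spec hP t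
  exact ((splitFun_spec ih.1 ih.2.1 ih.2.2).1 b).2.2.2

lemma scheme_disjoint {P : Set L} (hP : IsClosed P ∧ Crowded P ∧ P.Nonempty)
    (t : List Bool) : Disjoint (scheme P (false :: t)) (scheme P (true :: t)) := by
  have ih := scheme_spec hP t
  exact (splitFun_spec ih.1 ih.2.1 ih.2.2).2

end Aux

/-- The first `n` values of `σ`, most recent first. -/
def pre (σ : ℕ → Bool) : ℕ → List Bool
  | 0 => []
  | n + 1 => σ n :: pre σ n

lemma pre_congr {σ τ : ℕ → Bool} : ∀ n, (∀ k < n, σ k = τ k) → pre σ n = pre τ n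
  | 0, _ => rfl
  | n + 1, h => by
    rw [pre, pre, h n (Nat.lt_succ_self n),
      pre_congr n (fun k hk => h k (Nat.lt_succ_of_lt hk))]

section Branch

variable {L : Type*} [TopologicalSpace L] [CompactSpace L] [T2Space L]

/-- The branch set corresponding to `σ`. -/
noncomputable def Kb (P : Set L) (σ : ℕ → Bool) : Set L := ⋂ n, scheme P (pre σ n)

lemma Kb_subset (P : Set L) (σ : ℕ → Bool) (n : ℕ) : Kb P σ ⊆ scheme P (pre σ n) :=
  iInter_subset _ n

lemma Kb_subset_P (P : Set L) (σ : ℕ → Bool) : Kb P σ ⊆ P := Kb_subset P σ 0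

lemma Kb_isClosed {P : Set L} (hP : IsClosed P ∧ Crowded P ∧ P.Nonempty) (σ : ℕ → Bool) :
    IsClosed (Kb P σ) :=
  isClosed_iInter fun n => (scheme_spec hP (pre σ n)).1

lemma Kb_nonempty {P : Set L} (hP : IsClosed P ∧ Crowded P ∧ P.Nonempty) (σ : ℕ → Bool) :
    (Kb P σ).Nonempty := by
  apply IsCompact.nonempty_iInter_of_sequence_nonempty_isCompact_isClosed
  · intro n
    exact scheme_subset hP (σ n) (pre σ n)
  · intro n
    exact (scheme_spec hP (pre σ n)).2.2
  · exact (scheme_spec hP (pre σ 0)).1.isCompact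
  · intro n
    exact (scheme_spec hP (pre σ n)).1

lemma Kb_disjoint {P : Set L} (hP : IsClosed P ∧ Crowded P ∧ P.Nonempty)
    {σ τ : ℕ → Bool} (h : σ ≠ τ) : Disjoint (Kb P σ) (Kb P τ) := by
  classical
  have hex : ∃ n, σ n ≠ τ n := by
    by_contra h'
    push_neg at h'
    exact h (funext h')
  set m := Nat.find hex with hm_def
  have hm : σ m ≠ τ m := Nat.find_spec hex
  have hpre : pre σ m = pre τ m :=
    pre_congr m fun k hk => by
      by_contra hc
      exact Nat.find_min hex hk hc
  have hd : Disjoint (scheme P (pre σ (m + 1))) (scheme P (pre τ (m + 1))) := by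
    show Disjoint (scheme P (σ m :: pre σ m)) (scheme P (τ m :: pre τ m))
    rw [hpre]
    cases hσ : σ m <;> cases hτ : τ m
    · exact absurd (hσ.trans hτ.symm) hm
    · exact scheme_disjoint hP (pre τ m)
    · exact (scheme_disjoint hP (pre τ m)).symm
    · exact absurd (hσ.trans hτ.symm) hm
  exact hd.mono (Kb_subset P σ (m + 1)) (Kb_subset P τ (m + 1))

lemma Kb_elim_empty {P : Set L} (hP : IsClosed P ∧ Crowded P ∧ P.Nonempty)
    {A : Set L} (hA : IsClosed A) (σ : ℕ → Bool) (h : A ∩ Kb P σ = ∅) :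
    ∃ n, A ∩ scheme P (pre σ n) = ∅ := by
  by_contra hc
  push_neg at hc
  have hne : (⋂ n, A ∩ scheme P (pre σ n)).Nonempty := by
    apply IsCompact.nonempty_iInter_of_sequence_nonempty_isCompact_isClosed
    · intro n
      exact inter_subset_inter_right A (scheme_subset hP (σ n) (pre σ n))
    · intro n
      exact hc n
    · exact (hA.inter (scheme_spec hP (pre σ 0)).1).isCompact
    · intro n
      exact hA.inter (scheme_spec hP (pre σ n)).1
  rw [← inter_iInter] at hne
  rw [Kb] at h
  rw [h] at hne
  exact Set.not_nonempty_empty hne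

end Branch

/-- Let `L` be a compact Hausdorff space and `B ⊆ L`. Then `B` is scattered if and only if
every subset of `B` is resolvable in `L`; in particular, if `B` is not scattered, then some
subset of `B` is not resolvable. -/
theorem stmt15 {L : Type*} [TopologicalSpace L] [CompactSpace L] [T2Space L]
    (B : Set L) :
    ScatteredSet B ↔ ∀ C ⊆ B, Resolvable C := by
  constructor
  · -- scattered → all subsets resolvable
    intro hsc C hCB ε hε F hFcl hFne
    by_cases hcase : ∃ V, IsOpen V ∧ (F ∩ V).Nonempty ∧ F ∩ V ∩ C = ∅
    · obtain ⟨V, hV, hne, hdisj⟩ := hcase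
      refine ⟨V, hV, hne, ?_⟩
      have hsub : (C.indicator fun _ => (1 : ℝ)) '' (F ∩ V) ⊆ {0} := by
        rintro _ ⟨z, hz, rfl⟩
        have hzC : z ∉ C := fun hc => (eq_empty_iff_forall_notMem.mp hdisj z) ⟨hz, hc⟩
        simp [Set.indicator_of_notMem hzC]
      have hss : ((C.indicator fun _ => (1 : ℝ)) '' (F ∩ V)).Subsingleton :=
        subsingleton_singleton.anti hsub
      rw [Metric.diam_subsingleton hss]
      exact hε
    · push_neg at hcase
      have hSne : (C ∩ F).Nonempty := by
        have h1 := hcase univ isOpen_univ (by simpa using hFne)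
        obtain ⟨z, hz⟩ := h1
        exact ⟨z, hz.2, hz.1.1⟩
      obtain ⟨x, hxS, hxcl⟩ := hsc (C ∩ F) (fun z hz => hCB hz.1) hSne
      refine ⟨(closure ((C ∩ F) \ {x}))ᶜ, isClosed_closure.isOpen_compl,
        ⟨x, hxS.2, hxcl⟩, ?_⟩
      have hsingle : F ∩ (closure ((C ∩ F) \ {x}))ᶜ = {x} := by
        apply Subset.antisymm
        · intro y hy
          by_contra hyx
          have hyx' : y ≠ x := hyx
          obtain ⟨O1, O2, hO1, hO2, hyO1, hxO2, hO12⟩ := t2_separation hyx'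
          have hopen : IsOpen (O1 ∩ (closure ((C ∩ F) \ {x}))ᶜ) :=
            hO1.inter isClosed_closure.isOpen_compl
          have hne' : (F ∩ (O1 ∩ (closure ((C ∩ F) \ {x}))ᶜ)).Nonempty :=
            ⟨y, hy.1, hyO1, hy.2⟩
          obtain ⟨z, hz⟩ := hcase _ hopen hne'
          have hzS : z ∈ C ∩ F := ⟨hz.2, hz.1.1⟩
          have hzx : z ≠ x := by
            rintro rfl
            exact (disjoint_left.mp hO12) hz.1.2.1 hxO2
          exact hz.1.2.2 (subset_closure ⟨hzS, hzx⟩)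
        · intro y hy
          rw [mem_singleton_iff] at hy
          subst hy
          exact ⟨hxS.2, hxcl⟩
      rw [hsingle, image_singleton, Metric.diam_singleton]
      exact hε
  · -- all subsets resolvable → scattered
    intro h S hSB hSne
    by_contra hno
    push_neg at hno
    have hcr : Crowded S := hno
    -- Step 1: find a relatively open subset of closure S contained in S
    obtain ⟨V, hV, hVne, hVd⟩ :=
      h S hSB 1 one_pos (closure S) isClosed_closure (hSne.mono subset_closure)
    have hsubS : closure S ∩ V ⊆ S := by
      intro z hz
      by_contra hzS
      obtain ⟨w, hwV, hwS⟩ := _root_.mem_closure_iff.mp hz.1 V hV hz.2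
      have := one_le_diam_indicator (C := S) (T := closure S ∩ V)
        (a := w) (b := z) ⟨subset_closure hwS, hwV⟩ hwS hz hzS
      linarith
    obtain ⟨x, hx⟩ := hVne
    -- Step 2: shrink to get a compact crowded set P ⊆ S
    obtain ⟨t, htm, htc, hts⟩ := exists_mem_nhds_isClosed_subset (hV.mem_nhds hx.2)
    set W := interior t with hW_def
    have hW : IsOpen W := isOpen_interior
    have hxW : x ∈ W := mem_interior_iff_mem_nhds.mpr htm
    have hWV : closure W ⊆ V := (closure_minimal interior_subset htc).trans hts
    set P := closure (S ∩ W) with hP_def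
    have hPcl : IsClosed P := isClosed_closure
    have hPcr : Crowded P := crowded_closure_inter hcr hW
    have hxSW : x ∈ S ∩ W := ⟨hsubS hx, hxW⟩
    have hPne : P.Nonempty := ⟨x, subset_closure hxSW⟩
    have hPspec : IsClosed P ∧ Crowded P ∧ P.Nonempty := ⟨hPcl, hPcr, hPne⟩
    have hPS : P ⊆ S := by
      intro z hz
      have h1 : z ∈ closure S := closure_mono inter_subset_left hz
      have h2 : z ∈ closure W := closure_mono inter_subset_right hz
      exact hsubS ⟨h1, hWV h2⟩
    -- Step 3: Zorn to get a minimal closed set meeting every branch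
    set 𝒮 : Set (Set L) := {E | IsClosed E ∧ ∀ σ : ℕ → Bool, (E ∩ Kb P σ).Nonempty} with h𝒮
    have hP𝒮 : P ∈ 𝒮 := by
      refine ⟨hPcl, fun σ => ?_⟩
      obtain ⟨z, hz⟩ := Kb_nonempty hPspec σ
      exact ⟨z, Kb_subset_P P σ hz, hz⟩
    have hchaincond : ∀ c ⊆ 𝒮, IsChain (· ⊆ ·) c → c.Nonempty →
        ∃ lb ∈ 𝒮, ∀ s ∈ c, lb ⊆ s := by
      intro c hc hchain hcne
      refine ⟨⋂₀ c, ⟨isClosed_sInter fun u hu => (hc hu).1, fun σ => ?_⟩,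
        fun s hs => sInter_subset_of_mem hs⟩
      have hnec : Nonempty c := hcne.to_subtype
      have key : (⋂ E : c, ((E : Set L) ∩ Kb P σ)).Nonempty := by
        apply IsCompact.nonempty_iInter_of_directed_nonempty_isCompact_isClosed
        · intro E1 E2
          rcases hchain.total E1.2 E2.2 with h' | h'
          · exact ⟨E1, subset_rfl, inter_subset_inter_left _ h'⟩
          · exact ⟨E2, inter_subset_inter_left _ h', subset_rfl⟩
        · intro E1
          exact (hc E1.2).2 σ
        · intro E1
          exact ((hc E1.2).1.inter (Kb_isClosed hPspec σ)).isCompact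
        · intro E1
          exact (hc E1.2).1.inter (Kb_isClosed hPspec σ)
      rw [← iInter_inter, ← sInter_eq_iInter] at key
      exact key
    obtain ⟨E, hEP, hEmin⟩ := zorn_superset_nonempty 𝒮 hchaincond P hP𝒮
    have hE𝒮 : E ∈ 𝒮 := hEmin.prop
    -- Step 4: define the non-resolvable set C
    set D : Set (ℕ → Bool) := {σ | ∃ m, ∀ k ≥ m, σ k = false} with hD_def
    set C : Set L := E ∩ ⋃ σ ∈ D, Kb P σ with hC_def
    have hCB : C ⊆ B := by
      intro z hz
      obtain ⟨-, hz2⟩ := hz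
      simp only [mem_iUnion] at hz2
      obtain ⟨σ, -, hzσ⟩ := hz2
      exact hSB (hPS (Kb_subset_P P σ hzσ))
    -- density of C and its complement in E
    have hdense : ∀ V' : Set L, IsOpen V' → (E ∩ V').Nonempty →
        (∃ a ∈ E ∩ V', a ∈ C) ∧ (∃ b ∈ E ∩ V', b ∉ C) := by
      intro V' hV' hne'
      have hAcl : IsClosed (E \ V') := hE𝒮.1.sdiff hV'
      have hAnot : (E \ V') ∉ 𝒮 := by
        intro hmem
        have hEsub := hEmin.2 hmem diff_subset
        obtain ⟨a, ha⟩ := hne'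
        exact (hEsub ha.1).2 ha.2
      have hex : ∃ σ₀, (E \ V') ∩ Kb P σ₀ = ∅ := by
        by_contra hcon
        push_neg at hcon
        exact hAnot ⟨hAcl, fun σ => hcon σ⟩
      obtain ⟨σ₀, hσ₀⟩ := hex
      obtain ⟨n, hn⟩ := Kb_elim_empty hPspec hAcl σ₀ hσ₀
      set σD : ℕ → Bool := fun k => if k < n then σ₀ k else false with hσD_def
      set σN : ℕ → Bool := fun k => if k < n then σ₀ k else true with hσN_def
      have hpreD : pre σD n = pre σ₀ n := pre_congr n fun k hk => if_pos hk
      have hpreN : pre σN n = pre σ₀ n := pre_congr n fun k hk => if_pos hk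
      have hDempty : (E \ V') ∩ Kb P σD = ∅ := by
        apply eq_empty_of_subset_empty
        calc (E \ V') ∩ Kb P σD ⊆ (E \ V') ∩ scheme P (pre σ₀ n) := by
              rw [← hpreD]; exact inter_subset_inter_right _ (Kb_subset P σD n)
          _ = ∅ := hn
      have hNempty : (E \ V') ∩ Kb P σN = ∅ := by
        apply eq_empty_of_subset_empty
        calc (E \ V') ∩ Kb P σN ⊆ (E \ V') ∩ scheme P (pre σ₀ n) := by
              rw [← hpreN]; exact inter_subset_inter_right _ (Kb_subset P σN n)
          _ = ∅ := hn
      obtain ⟨a, haE, haK⟩ := hE𝒮.2 σD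
      have haV' : a ∈ V' := by
        by_contra hcon
        exact absurd hDempty (nonempty_iff_ne_empty.mp ⟨a, ⟨haE, hcon⟩, haK⟩)
      have hσDD : σD ∈ D := ⟨n, fun k hk => if_neg (not_lt.mpr hk)⟩
      obtain ⟨b, hbE, hbK⟩ := hE𝒮.2 σN
      have hbV' : b ∈ V' := by
        by_contra hcon
        exact absurd hNempty (nonempty_iff_ne_empty.mp ⟨b, ⟨hbE, hcon⟩, hbK⟩)
      refine ⟨⟨a, ⟨haE, haV'⟩, haE, ?_⟩, ⟨b, ⟨hbE, hbV'⟩, ?_⟩⟩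
      · exact mem_biUnion hσDD haK
      · rintro ⟨-, hb2⟩
        simp only [mem_iUnion] at hb2
        obtain ⟨σ, hσD', hbσ⟩ := hb2
        have hne : σ ≠ σN := by
          rintro rfl
          obtain ⟨m, hm⟩ := hσD'
          have h1 := hm (max m n) (le_max_left m n)
          have h2 : σN (max m n) = true := if_neg (not_lt.mpr (le_max_right m n))
          rw [h2] at h1
          exact Bool.noConfusion h1
        exact (Kb_disjoint hPspec hne).le_bot ⟨hbσ, hbK⟩
    -- Step 5: contradiction with resolvability of C
    have hEne : E.Nonempty := by
      obtain ⟨z, hz⟩ := hE𝒮.2 fun _ => false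
      exact ⟨z, hz.1⟩
    obtain ⟨V', hV', hne', hdiam⟩ := h C hCB 1 one_pos E hE𝒮.1 hEne
    obtain ⟨⟨a, haEV, haC⟩, ⟨b, hbEV, hbC⟩⟩ := hdense V' hV' hne'
    have := one_le_diam_indicator haEV haC hbEV hbC
    linarith
end
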